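/- arXiv:2206.10823 — 4 statements merged into one kernel-verified Lean document; each statement's English description precedes it below -/
import Mathlib

section
/- Let c ≥ 3 and let D be a strong c-partite tournament. Then D contains a k-cycle for every k with 3 ≤ k ≤ c. -/
namespace MPT

variable {V : Type*}

/-- `D` together with the partition map `part : V → Fin c` is a `c`-partite tournament:
no arcs inside a partite set, and exactly one arc between any two vertices in
different partite sets. -/
structure IsCPT (D : Digraph V) (c : ℕ) (part : V → Fin c) : Prop where
  part_surj : Function.Surjective part
  not_adj_of_same : ∀ x y : V, part x = part y → ¬ D.Adj x y
  xor_adj : ∀ x y : V, part x ≠ part y → Xor' (D.Adj x y) (D.Adj y x)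

/-- `f 0, f 1, …, f n` is a directed walk of length `n` from `x` to `y` in `D`. -/
def IsWalk (D : Digraph V) (n : ℕ) (f : ℕ → V) (x y : V) : Prop :=
  f 0 = x ∧ f n = y ∧ ∀ i < n, D.Adj (f i) (f (i + 1))

/-- A digraph is strong if each vertex can reach each other vertex by a directed path. -/
def IsStrong (D : Digraph V) : Prop :=
  ∀ x y : V, x ≠ y → ∃ (n : ℕ) (f : ℕ → V), IsWalk D n f x y

/-- A `c`-partite tournament is rich if it is strong and every partite set has at
least two vertices. -/
def IsRich (D : Digraph V) (c : ℕ) (part : V → Fin c) : Prop :=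
  IsStrong D ∧ ∀ p : Fin c, ∃ u v : V, u ≠ v ∧ part u = p ∧ part v = p

/-- `D` contains a directed cycle with exactly `q` arcs (through `q` distinct vertices). -/
def HasCycle (D : Digraph V) (q : ℕ) : Prop :=
  ∃ f : ZMod q → V, Function.Injective f ∧ ∀ i : ZMod q, D.Adj (f i) (f (i + 1))

/-- The distance from `x` to `y`: the length of a shortest directed path. -/
noncomputable def dist (D : Digraph V) (x y : V) : ℕ :=
  sInf {n : ℕ | ∃ f : ℕ → V, IsWalk D n f x y}

/-- `{i, j} ≡ {s, t} (mod n)` as unordered pairs of residues. -/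
def ModEqPair (n i j s t : ℕ) : Prop :=
  (i ≡ s [MOD n] ∧ j ≡ t [MOD n]) ∨ (i ≡ t [MOD n] ∧ j ≡ s [MOD n])

/-- The arc rule of `Q¹_m` at the level of path indices: an arc from `x_i` to `x_j`
iff `j = i + 1`, or `i - j > 1` and `i ≢ j (mod c+1)`; with all arcs between the
residue classes of `s` and `t` (mod `c+1`) deleted. -/
def QArc (c s t i j : ℕ) : Prop :=
  (j = i + 1 ∨ (j + 1 < i ∧ ¬ i ≡ j [MOD c + 1])) ∧ ¬ ModEqPair (c + 1) i j s t

/-- The indices of `Q¹_m` that may be blown up into a larger independent set. -/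
def QBlowup (c m s t i : ℕ) : Prop :=
  i = 1 ∨ i = 2 ∨ i = m - 1 ∨ i = m ∨
  (s = 1 ∧ (t = 3 ∨ t = 4) ∧ i = t) ∨
  (i = m - 2 ∧ ModEqPair (c + 1) m (m - 2) s t) ∨
  (i = m - 3 ∧ ModEqPair (c + 1) m (m - 3) s t)

/-- `D` is obtained from the path-indexed digraph with arc rule `arc` on indices
`1, …, m` by replacing index `i` with an independent vertex set `A i`, where only
indices satisfying `allowed` may receive more than one vertex. -/
def IsBlowupOf (D : Digraph V) (m : ℕ) (arc : ℕ → ℕ → Prop) (allowed : ℕ → Prop) : Prop :=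
  ∃ A : ℕ → Set V,
    (∀ v : V, ∃ i, 1 ≤ i ∧ i ≤ m ∧ v ∈ A i) ∧
    (∀ i j, i ≠ j → Disjoint (A i) (A j)) ∧
    (∀ i, 1 ≤ i → i ≤ m → (A i).Nonempty) ∧
    (∀ i, 1 ≤ i → i ≤ m → ¬ allowed i → (A i).Subsingleton) ∧
    (∀ i j, 1 ≤ i → i ≤ m → 1 ≤ j → j ≤ m →
      ∀ u ∈ A i, ∀ w ∈ A j, (D.Adj u w ↔ arc i j))

/-- Membership in the family `𝒬¹_m`. -/
def IsInQ1 (D : Digraph V) (c m : ℕ) : Prop :=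
  ∃ s t : ℕ, 1 ≤ s ∧ s + 1 < t ∧ t ≤ c + 1 ∧
    IsBlowupOf D m (QArc c s t) (QBlowup c m s t)

/-- The four cases in which arcs between `A a` and `A b` get reversed to form `𝒬²_m`. -/
def QRevCase (c m s t a b : ℕ) : Prop :=
  (t = 3 ∧ s = 1 ∧ a = 2 ∧ b = 3) ∨
  (t = c + 1 ∧ s = 2 ∧ a = 1 ∧ b = 2) ∨
  (ModEqPair (c + 1) (m - 2) m s t ∧ a = m - 2 ∧ b = m - 1) ∨
  (ModEqPair (c + 1) (m - 1) (m - c) s t ∧ a = m - 1 ∧ b = m)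

/-- The arc rule obtained from `QArc` by reversing all arcs from index `a` to index `b`. -/
def QArcRev (c s t a b i j : ℕ) : Prop :=
  ((¬(i = a ∧ j = b) ∧ ¬(i = b ∧ j = a)) ∧ QArc c s t i j) ∨
  ((i = b ∧ j = a) ∧ QArc c s t a b)

/-- Membership in the family `𝒬²_m`. -/
def IsInQ2 (D : Digraph V) (c m : ℕ) : Prop :=
  ∃ s t a b : ℕ, 1 ≤ s ∧ s + 1 < t ∧ t ≤ c + 1 ∧ QRevCase c m s t a b ∧
    IsBlowupOf D m (QArcRev c s t a b) (QBlowup c m s t)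

/-- Membership in the family `𝒬_m = 𝒬¹_m ∪ 𝒬²_m`. -/
def IsInQ (D : Digraph V) (c m : ℕ) : Prop :=
  IsInQ1 D c m ∨ IsInQ2 D c m

/-- The arc rule of `W_m`: an arc from `x_i` to `x_j` iff `j = i + 1`, or
`i - j > 1` and `i ≢ j (mod c)`. -/
def WArc (c i j : ℕ) : Prop :=
  j = i + 1 ∨ (j + 1 < i ∧ ¬ i ≡ j [MOD c])

/-- The indices of `W_m` that are blown up (into sets of size at least two). -/
def WBlowup (m i : ℕ) : Prop :=
  i = 1 ∨ i = 2 ∨ i = m - 1 ∨ i = m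

/-- Membership in the family `𝒲_m`. -/
def IsInW (D : Digraph V) (c m : ℕ) : Prop :=
  ∃ A : ℕ → Set V,
    (∀ v : V, ∃ i, 1 ≤ i ∧ i ≤ m ∧ v ∈ A i) ∧
    (∀ i j, i ≠ j → Disjoint (A i) (A j)) ∧
    (∀ i, 1 ≤ i → i ≤ m → (A i).Nonempty) ∧
    (∀ i, 1 ≤ i → i ≤ m → WBlowup m i → ∃ u ∈ A i, ∃ w ∈ A i, u ≠ w) ∧
    (∀ i, 1 ≤ i → i ≤ m → ¬ WBlowup m i → (A i).Subsingleton) ∧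
    (∀ i j, 1 ≤ i → i ≤ m → 1 ≤ j → j ≤ m →
      ∀ u ∈ A i, ∀ w ∈ A j, (D.Adj u w ↔ WArc c i j))

/-- Membership in the family `ℋ`: there is an index `i` with `2 < i < c - 1`,
partite sets `W 2, …, W (c+1)` (with `W i` possibly of size one and all others of
size at least two) and a distinguished extra vertex `v1`, such that every vertex of
`W j₁` dominates every vertex of `W j₂` for `2 ≤ j₁ < j₂ ≤ c + 1`, there are no arcs
inside a `W j` nor between `v1` and `W i`, and between `v1` and each vertex of each
`W j` (`j ≠ i`) there is exactly one arc of arbitrary direction. -/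
def IsInH (D : Digraph V) (c : ℕ) : Prop :=
  ∃ i : ℕ, 2 < i ∧ i + 1 < c ∧
  ∃ (W : ℕ → Set V) (v1 : V),
    (∀ v : V, v = v1 ∨ ∃ j, 2 ≤ j ∧ j ≤ c + 1 ∧ v ∈ W j) ∧
    (∀ j, 2 ≤ j → j ≤ c + 1 → v1 ∉ W j) ∧
    (∀ j k, 2 ≤ j → j ≤ c + 1 → 2 ≤ k → k ≤ c + 1 → j ≠ k → Disjoint (W j) (W k)) ∧
    (W i).Nonempty ∧
    (∀ j, 2 ≤ j → j ≤ c + 1 → j ≠ i → ∃ u ∈ W j, ∃ w ∈ W j, u ≠ w) ∧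
    (∀ j k, 2 ≤ j → j < k → k ≤ c + 1 → ∀ u ∈ W j, ∀ w ∈ W k, D.Adj u w ∧ ¬ D.Adj w u) ∧
    (∀ j, 2 ≤ j → j ≤ c + 1 → ∀ u ∈ W j, ∀ w ∈ W j, ¬ D.Adj u w) ∧
    (∀ j, 2 ≤ j → j ≤ c + 1 → j ≠ i → ∀ u ∈ W j, Xor' (D.Adj v1 u) (D.Adj u v1)) ∧
    (∀ u ∈ W i, ¬ D.Adj v1 u ∧ ¬ D.Adj u v1) ∧
    ¬ D.Adj v1 v1

end MPT

open MPT

namespace MPTAux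

variable {V : Type*}

/-- Reversal of a digraph. -/
def DRev (D : Digraph V) : Digraph V := ⟨fun a b => D.Adj b a⟩

/-- A cycle of length `n` presented as a periodic function `ℕ → V`. -/
def PC (D : Digraph V) (n : ℕ) (u : ℕ → V) : Prop :=
  (∀ i, u (i + n) = u i) ∧ (∀ i j, i < n → j < n → u i = u j → i = j) ∧
    ∀ i, D.Adj (u i) (u (i + 1))

namespace PC

variable {D : Digraph V} {n : ℕ} {u : ℕ → V}

lemma period (h : PC D n u) : ∀ i, u (i + n) = u i := h.1

lemma inj (h : PC D n u) : ∀ i j, i < n → j < n → u i = u j → i = j := h.2.1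

lemma arc (h : PC D n u) : ∀ i, D.Adj (u i) (u (i + 1)) := h.2.2

lemma mul_period (h : PC D n u) : ∀ q r, u (r + n * q) = u r := by
  intro q
  induction q with
  | zero => simp
  | succ q ih =>
    intro r
    have e : r + n * (q + 1) = (r + n * q) + n := by ring
    rw [e, h.period, ih]

lemma mod (h : PC D n u) (a : ℕ) : u a = u (a % n) := by
  conv_lhs => rw [← Nat.mod_add_div a n]
  exact h.mul_period _ _

lemma eq_iff (h : PC D n u) (hn : 0 < n) {a b : ℕ} : u a = u b ↔ a % n = b % n := by
  constructor
  · intro hab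
    exact h.inj _ _ (Nat.mod_lt _ hn) (Nat.mod_lt _ hn) (by rw [← h.mod, ← h.mod, hab])
  · intro hab
    rw [h.mod a, h.mod b, hab]

lemma shift (h : PC D n u) (j : ℕ) : PC D n (fun i => u (j + i)) := by
  rcases Nat.eq_zero_or_pos n with hn | hn
  · subst hn
    exact ⟨fun i => by simp, fun i j h1 h2 _ => by omega, fun i => by
      have := h.arc (j + i); simpa [← Nat.add_assoc] using this⟩
  · refine ⟨fun i => by simpa [← Nat.add_assoc] using h.period (j + i), ?_, fun i => ?_⟩
    · intro i₁ i₂ h1 h2 he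
      have h3 := (h.eq_iff hn).mp he
      have h4 : i₁ ≡ i₂ [MOD n] := Nat.ModEq.add_left_cancel' j h3
      have h5 : i₁ % n = i₂ % n := h4
      rwa [Nat.mod_eq_of_lt h1, Nat.mod_eq_of_lt h2] at h5
    · have := h.arc (j + i)
      simpa [← Nat.add_assoc] using this

lemma toHasCycle (h : PC D n u) (hn : 0 < n) : HasCycle D n := by
  haveI : NeZero n := ⟨hn.ne'⟩
  refine ⟨fun i => u i.val, ?_, ?_⟩
  · intro i j hij
    have := h.inj i.val j.val (ZMod.val_lt i) (ZMod.val_lt j) hij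
    exact ZMod.val_injective n this
  · intro i
    have hval : u ((i + 1).val) = u (i.val + 1) := by
      refine (h.eq_iff hn).mpr ?_
      have h1 : ((i + 1).val) = (i.val + (1 : ZMod n).val) % n := ZMod.val_add i 1
      have h2 : (1 : ZMod n).val = 1 % n := by
        have e : ((1 : ℕ) : ZMod n) = (1 : ZMod n) := by push_cast; ring
        rw [← e, ZMod.val_natCast]
      rw [h1, h2, Nat.mod_mod, Nat.add_mod_mod]
    show D.Adj (u i.val) (u ((i + 1).val))
    rw [hval]
    exact h.arc i.val

lemma ofHasCycle {g : ZMod n → V} (hn : 0 < n) (hinj : Function.Injective g)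
    (harc : ∀ i : ZMod n, D.Adj (g i) (g (i + 1))) : PC D n (fun i => g (i : ZMod n)) := by
  haveI : NeZero n := ⟨hn.ne'⟩
  refine ⟨fun i => ?_, fun i j h1 h2 he => ?_, fun i => ?_⟩
  · show g ((i + n : ℕ) : ZMod n) = g ((i : ℕ) : ZMod n)
    congr 1
    push_cast [ZMod.natCast_self]
    ring
  · have : ((i : ZMod n)) = (j : ZMod n) := hinj he
    have hi := ZMod.val_cast_of_lt h1
    have hj := ZMod.val_cast_of_lt h2
    rw [← hi, ← hj, this]
  · show D.Adj (g ((i : ℕ) : ZMod n)) (g ((i + 1 : ℕ) : ZMod n))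
    have e : ((i + 1 : ℕ) : ZMod n) = (i : ZMod n) + 1 := by push_cast; ring
    rw [e]
    exact harc (i : ZMod n)

lemma rev (h : PC D n u) (hn : 0 < n) : PC (DRev D) n (fun i => u (n - i % n)) := by
  refine ⟨fun i => ?_, fun i₁ i₂ h1 h2 he => ?_, fun i => ?_⟩
  · show u (n - (i + n) % n) = u (n - i % n)
    rw [Nat.add_mod_right]
  · have he' : u (n - i₁ % n) = u (n - i₂ % n) := he
    rw [Nat.mod_eq_of_lt h1, Nat.mod_eq_of_lt h2] at he'
    have h3 := (h.eq_iff hn).mp he'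
    rcases Nat.eq_zero_or_pos i₁ with hz1 | hz1 <;> rcases Nat.eq_zero_or_pos i₂ with hz2 | hz2
    · omega
    · subst hz1
      rw [Nat.sub_zero, Nat.mod_self, Nat.mod_eq_of_lt (by omega)] at h3
      omega
    · subst hz2
      rw [Nat.sub_zero, Nat.mod_self, Nat.mod_eq_of_lt (by omega)] at h3
      omega
    · rw [Nat.mod_eq_of_lt (by omega), Nat.mod_eq_of_lt (by omega)] at h3
      omega
  · show D.Adj (u (n - (i + 1) % n)) (u (n - i % n))
    have ha : i % n < n := Nat.mod_lt _ hn
    have h1 : (i + 1) % n = (i % n + 1) % n := by rw [Nat.mod_add_mod]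
    rcases Nat.lt_or_ge (i % n + 1) n with hlt | hge
    · rw [h1, Nat.mod_eq_of_lt hlt]
      have e : n - i % n = (n - (i % n + 1)) + 1 := by omega
      rw [e]
      exact h.arc _
    · have hin : i % n = n - 1 := by omega
      have h2 : (i + 1) % n = 0 := by rw [h1, hin]; simp [Nat.sub_add_cancel hn]
      rw [h2, hin, Nat.sub_zero, Nat.sub_sub_self hn]
      have e : u n = u 0 := by have := h.period 0; simpa using this
      rw [e]
      exact h.arc 0

end PC

lemma hasCycle_rev {D : Digraph V} {q : ℕ} (h : HasCycle (DRev D) q) : HasCycle D q := by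
  obtain ⟨g, hinj, harc⟩ := h
  refine ⟨fun i => g (-i), fun i j hij => ?_, fun i => ?_⟩
  · have := hinj hij
    exact neg_injective this
  · have := harc (-(i + 1))
    have e : (-(i + 1) + 1 : ZMod q) = -i := by ring
    rw [e] at this
    exact this

/-- Gluing a function defined on `[0, m)` into a periodic cycle function. -/
lemma pc_glue (D : Digraph V) (m : ℕ) (hm : 0 < m) (h0 : ℕ → V)
    (hinj : ∀ i j, i < m → j < m → h0 i = h0 j → i = j)
    (hadj : ∀ i, i + 1 < m → D.Adj (h0 i) (h0 (i + 1)))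
    (hwrap : D.Adj (h0 (m - 1)) (h0 0)) :
    PC D m (fun i => h0 (i % m)) := by
  refine ⟨fun i => ?_, fun i j h1 h2 he => ?_, fun i => ?_⟩
  · show h0 ((i + m) % m) = h0 (i % m)
    rw [Nat.add_mod_right]
  · have he' : h0 (i % m) = h0 (j % m) := he
    rw [Nat.mod_eq_of_lt h1, Nat.mod_eq_of_lt h2] at he'
    exact hinj _ _ h1 h2 he'
  · show D.Adj (h0 (i % m)) (h0 ((i + 1) % m))
    have ha : i % m < m := Nat.mod_lt _ hm
    have h1 : (i + 1) % m = (i % m + 1) % m := by rw [Nat.mod_add_mod]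
    rcases Nat.lt_or_ge (i % m + 1) m with hlt | hge
    · rw [h1, Nat.mod_eq_of_lt hlt]
      exact hadj _ hlt
    · have hin : i % m = m - 1 := by omega
      have h2 : (i + 1) % m = 0 := by rw [h1, hin]; simp [Nat.sub_add_cancel hm]
      rw [h2, hin]
      exact hwrap

end MPTAux
namespace MPTAux

variable {V : Type*}

/-- Minimal walk from `v` to a target set `S`, with all its minimality properties. -/
lemma exists_min_walk (D : Digraph V) (S : V → Prop) (v : V) (n₀ : ℕ) (f₀ : ℕ → V)
    (h₀ : f₀ 0 = v ∧ (∀ i < n₀, D.Adj (f₀ i) (f₀ (i + 1))) ∧ S (f₀ n₀)) :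
    ∃ (t : ℕ) (f : ℕ → V), t ≤ n₀ ∧ f 0 = v ∧ (∀ i < t, D.Adj (f i) (f (i + 1))) ∧ S (f t) ∧
      (∀ p, p < t → ¬ S (f p)) ∧
      (∀ p q, p < q → q ≤ t → f p ≠ f q) ∧
      (∀ p q, p + 2 ≤ q → q ≤ t → ¬ D.Adj (f p) (f q)) ∧
      (∀ p x, p + 1 < t → S x → ¬ D.Adj (f p) x) := by
  classical
  set W : Set ℕ := {m | ∃ f : ℕ → V, f 0 = v ∧ (∀ i < m, D.Adj (f i) (f (i + 1))) ∧ S (f m)}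
    with hW
  have hne : n₀ ∈ W := ⟨f₀, h₀⟩
  have htmem : sInf W ∈ W := Nat.sInf_mem ⟨n₀, hne⟩
  set t := sInf W with htdef
  have htmem' : ∃ f : ℕ → V, f 0 = v ∧ (∀ i < t, D.Adj (f i) (f (i + 1))) ∧ S (f t) := htmem
  obtain ⟨f, hf0, harc, hfS⟩ := htmem'
  have hmin : ∀ m, m < t →
      ¬ ∃ f : ℕ → V, f 0 = v ∧ (∀ i < m, D.Adj (f i) (f (i + 1))) ∧ S (f m) :=
    fun m hm h => Nat.notMem_of_lt_sInf hm h
  have htn₀ : t ≤ n₀ := Nat.sInf_le hne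
  -- (P1)
  have hP1 : ∀ p, p < t → ¬ S (f p) := by
    intro p hp hSp
    exact hmin p hp ⟨f, hf0, fun i hi => harc i (by omega), hSp⟩
  -- (P4)
  have hP4 : ∀ p x, p + 1 < t → S x → ¬ D.Adj (f p) x := by
    intro p x hp hSx hadj
    refine hmin (p + 1) hp ⟨fun i => if i ≤ p then f i else x, ?_, ?_, ?_⟩
    · simp [hf0]
    · intro i hi
      rcases Nat.lt_or_ge i p with h | h
      · simp only [if_pos (by omega : i ≤ p), if_pos (by omega : i + 1 ≤ p)]
        exact harc i (by omega)
      · have hip : i = p := by omega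
        subst hip
        simp only [if_pos (le_refl i), if_neg (by omega : ¬ i + 1 ≤ i)]
        exact hadj
    · simp only [if_neg (by omega : ¬ p + 1 ≤ p)]
      exact hSx
  -- (P2)
  have hP2 : ∀ p q, p < q → q ≤ t → f p ≠ f q := by
    intro p q hpq hqt heq
    rcases Nat.eq_or_lt_of_le hqt with hq | hq
    · subst hq
      exact hP1 p hpq (heq ▸ hfS)
    · set d := q - p with hd
      refine hmin (t - d) (by omega) ⟨fun i => if i ≤ p then f i else f (i + d), ?_, ?_, ?_⟩
      · simp [hf0]
      · intro i hi
        rcases Nat.lt_or_ge i p with h | h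
        · simp only [if_pos (by omega : i ≤ p), if_pos (by omega : i + 1 ≤ p)]
          exact harc i (by omega)
        · rcases Nat.eq_or_lt_of_le h with h' | h'
          · simp only [if_pos (show i ≤ p by omega), if_neg (show ¬ i + 1 ≤ p by omega)]
            rw [show i + 1 + d = q + 1 by omega, show f i = f q from h' ▸ heq]
            exact harc q (by omega)
          · simp only [if_neg (by omega : ¬ i ≤ p), if_neg (by omega : ¬ i + 1 ≤ p)]
            have := harc (i + d) (by omega)
            have e : i + d + 1 = i + 1 + d := by omega
            rwa [e] at this
      · simp only [if_neg (by omega : ¬ t - d ≤ p)]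
        have e : t - d + d = t := by omega
        rw [e]
        exact hfS
  -- (P3)
  have hP3 : ∀ p q, p + 2 ≤ q → q ≤ t → ¬ D.Adj (f p) (f q) := by
    intro p q hpq hqt hadj
    rcases Nat.eq_or_lt_of_le hqt with hq | hq
    · subst hq
      exact hP4 p (f t) (by omega) hfS hadj
    · set d := q - p - 1 with hd
      have hd1 : 1 ≤ d := by omega
      refine hmin (t - d) (by omega) ⟨fun i => if i ≤ p then f i else f (i + d), ?_, ?_, ?_⟩
      · simp [hf0]
      · intro i hi
        rcases Nat.lt_or_ge i p with h | h
        · simp only [if_pos (by omega : i ≤ p), if_pos (by omega : i + 1 ≤ p)]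
          exact harc i (by omega)
        · rcases Nat.eq_or_lt_of_le h with h' | h'
          · simp only [if_pos (show i ≤ p by omega), if_neg (show ¬ i + 1 ≤ p by omega)]
            rw [show i + 1 + d = q by omega, ← h']
            exact hadj
          · simp only [if_neg (by omega : ¬ i ≤ p), if_neg (by omega : ¬ i + 1 ≤ p)]
            have := harc (i + d) (by omega)
            have e : i + d + 1 = i + 1 + d := by omega
            rwa [e] at this
      · simp only [if_neg (by omega : ¬ t - d ≤ p)]
        have e : t - d + d = t := by omega
        rw [e]
        exact hfS
  exact ⟨t, f, htn₀, hf0, harc, hfS, hP1, hP2, hP3, hP4⟩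

/-- Transition lemma: a periodic predicate that is somewhere false and somewhere true
has a false-to-true transition. -/
lemma trans_up {n : ℕ} {ε : ℕ → Prop} (hper : ∀ i, ε (i + n) ↔ ε i) (hn : 0 < n)
    {a b : ℕ} (hb : ¬ ε b) (ha : ε a) : ∃ i, ¬ ε i ∧ ε (i + 1) := by
  classical
  have hmul : ∀ q i, ε (i + n * q) ↔ ε i := by
    intro q
    induction q with
    | zero => simp
    | succ q ih =>
      intro i
      have e : i + n * (q + 1) = (i + n * q) + n := by ring
      rw [e, hper, ih]
  have key : ∀ m b, ¬ ε b → ε (b + m) → ∃ i, ¬ ε i ∧ ε (i + 1) := by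
    intro m
    induction m with
    | zero => intro b hb h; exact absurd h (by simpa using hb)
    | succ m ih =>
      intro b hb h
      by_cases hm : ε (b + m)
      · exact ih b hb hm
      · exact ⟨b + m, hm, by rwa [show b + m + 1 = b + (m + 1) by omega]⟩
  have hle : b ≤ a + n * b := by nlinarith
  refine key (a + n * b - b) b hb ?_
  rw [show b + (a + n * b - b) = a + n * b by omega]
  exact (hmul b a).mpr ha

lemma trans_down {n : ℕ} {ε : ℕ → Prop} (hper : ∀ i, ε (i + n) ↔ ε i) (hn : 0 < n)
    {a b : ℕ} (hb : ¬ ε b) (ha : ε a) : ∃ i, ε i ∧ ¬ ε (i + 1) := by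
  classical
  obtain ⟨i, h1, h2⟩ := trans_up (ε := fun i => ¬ ε i) (fun i => not_congr (hper i)) hn
    (a := b) (b := a) (not_not.mpr ha) hb
  exact ⟨i, not_not.mp h1, h2⟩

/-- Pigeonhole: a function into `Fin c` defined on fewer than `c` indices avoids some value. -/
lemma exists_avoid {c : ℕ} (k : ℕ) (hkc : k < c) (g : ℕ → Fin c) :
    ∃ p : Fin c, ∀ i, i < k → g i ≠ p := by
  classical
  by_contra h
  push_neg at h
  have hsub : (Finset.univ : Finset (Fin c)) ⊆ (Finset.range k).image g := by
    intro p _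
    obtain ⟨i, hik, hgi⟩ := h p
    exact Finset.mem_image.mpr ⟨i, Finset.mem_range.mpr hik, hgi⟩
  have h1 : c ≤ ((Finset.range k).image g).card := by
    have := Finset.card_le_card hsub
    simpa using this
  have h2 : ((Finset.range k).image g).card ≤ k := by
    refine le_trans (Finset.card_image_le) (by simp)
  omega

section CPT

variable {D : Digraph V} {c : ℕ} {part : V → Fin c}

lemma _root_.MPT.IsCPT.adj_ne (hT : IsCPT D c part) {x y : V} (h : D.Adj x y) : part x ≠ part y :=
  fun he => hT.not_adj_of_same x y he h

lemma _root_.MPT.IsCPT.asymm (hT : IsCPT D c part) {x y : V} (h : D.Adj x y) : ¬ D.Adj y x := by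
  rcases hT.xor_adj x y (hT.adj_ne h) with ⟨_, h2⟩ | ⟨_, h2⟩
  · exact h2
  · exact absurd h h2

lemma _root_.MPT.IsCPT.adj_of_not (hT : IsCPT D c part) {x y : V} (hne : part x ≠ part y)
    (h : ¬ D.Adj y x) : D.Adj x y := by
  rcases hT.xor_adj x y hne with ⟨h1, _⟩ | ⟨h1, _⟩
  · exact h1
  · exact absurd h1 h

lemma _root_.MPT.IsCPT.rev (hT : IsCPT D c part) : IsCPT (DRev D) c part := by
  refine ⟨hT.part_surj, fun x y h => hT.not_adj_of_same y x h.symm, fun x y h => ?_⟩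
  exact hT.xor_adj y x (Ne.symm h)

end CPT

end MPTAux
namespace MPTAux

variable {V : Type*}

/-- Key lemma: if `C` is a `k`-cycle (`k ≥ 3`), `v` lies in a partite set disjoint
from the partite sets of `C`, every vertex of `C` dominates `v`, and there is a walk
from `v` back to `C`, then `D` has a `(k+1)`-cycle. -/
lemma lemA {D : Digraph V} {c : ℕ} {part : V → Fin c} (hT : IsCPT D c part) :
    ∀ T k, 3 ≤ k → ∀ u : ℕ → V, PC D k u → ∀ v : V,
      (∀ i, part v ≠ part (u i)) → (∀ i, D.Adj (u i) v) →
      (∃ f : ℕ → V, f 0 = v ∧ (∀ i < T, D.Adj (f i) (f (i + 1))) ∧ ∃ s, f T = u s) →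
      HasCycle D (k + 1) := by
  intro T
  induction T using Nat.strong_induction_on with
  | _ T IH =>
  intro k hk u hu v hv hCv hwalk
  obtain ⟨f₀, hf₀0, hf₀arc, s₁, hf₀T⟩ := hwalk
  have hkpos : 0 < k := by omega
  obtain ⟨t, f, htT, hf0, harc, hfS, hnotS, hdist, hchord, hshort⟩ :=
    exists_min_walk D (fun x => ∃ s, x = u s) v T f₀ ⟨hf₀0, hf₀arc, ⟨s₁, hf₀T⟩⟩
  obtain ⟨s₀, hs₀⟩ := hfS
  set u' : ℕ → V := fun i => u (s₀ + i) with hu'def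
  have hu' : PC D k u' := hu.shift s₀
  have hv' : ∀ i, part v ≠ part (u' i) := fun i => hv _
  have hCv' : ∀ i, D.Adj (u' i) v := fun i => hCv _
  have hSu' : ∀ i, ∃ s, u' i = u s := fun i => ⟨s₀ + i, rfl⟩
  have hft : f t = u' 0 := by
    show f t = u (s₀ + 0)
    rw [Nat.add_zero]; exact hs₀
  have hfnotu : ∀ p, p < t → ∀ i, f p ≠ u' i := fun p hp i h => hnotS p hp (h ▸ hSu' i)
  -- t ≥ 2
  have ht2 : 2 ≤ t := by
    by_contra h
    push_neg at h
    interval_cases t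
    · exact hv' 0 (congrArg part (hf0 ▸ hft))
    · have h1 := harc 0 (by omega)
      rw [hf0, hft] at h1
      exact hT.asymm (hCv' 0) h1
  rcases le_or_gt t k with htk | htk
  · -- direct (k+1)-cycle:  u'0 … u'(k-t)  v  f1 … f(t-1)
    set h0 : ℕ → V := fun i => if i ≤ k - t then u' i else f (i - (k - t) - 1) with hh0
    have hA : ∀ i, i ≤ k - t → h0 i = u' i := fun i hi => if_pos hi
    have hB : ∀ i, ¬ i ≤ k - t → h0 i = f (i - (k - t) - 1) := fun i hi => if_neg hi
    have hpc : PC D (k + 1) (fun i => h0 (i % (k + 1))) := by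
      refine pc_glue D (k + 1) (by omega) h0 ?_ ?_ ?_
      · intro i j hi hj he
        by_cases h1 : i ≤ k - t <;> by_cases h2 : j ≤ k - t
        · rw [hA i h1, hA j h2] at he
          exact hu'.inj i j (by omega) (by omega) he
        · rw [hA i h1, hB j h2] at he
          exact absurd he.symm (hfnotu (j - (k - t) - 1) (by omega) i)
        · rw [hB i h1, hA j h2] at he
          exact absurd he (hfnotu (i - (k - t) - 1) (by omega) j)
        · rw [hB i h1, hB j h2] at he
          rcases Nat.lt_trichotomy (i - (k - t) - 1) (j - (k - t) - 1) with h3 | h3 | h3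
          · exact absurd he (hdist _ _ h3 (by omega))
          · omega
          · exact absurd he.symm (hdist _ _ h3 (by omega))
      · intro i hi
        rcases Nat.lt_or_ge (i + 1) (k - t + 1) with h1 | h1
        · rw [hA i (by omega), hA (i + 1) (by omega)]
          exact hu'.arc i
        · rcases Nat.eq_or_lt_of_le h1 with h2 | h2
          · rw [hA i (by omega), hB (i + 1) (by omega),
              show i + 1 - (k - t) - 1 = 0 by omega, hf0, show i = k - t by omega]
            exact hCv' (k - t)
          · rw [hB i (by omega), hB (i + 1) (by omega)]
            have := harc (i - (k - t) - 1) (by omega)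
            rwa [show i - (k - t) - 1 + 1 = i + 1 - (k - t) - 1 by omega] at this
      · rw [hB (k + 1 - 1) (by omega), hA 0 (by omega),
          show k + 1 - 1 - (k - t) - 1 = t - 1 by omega]
        have := harc (t - 1) (by omega)
        rwa [show t - 1 + 1 = t by omega, hft] at this
    exact hpc.toHasCycle (by omega)
  · -- t ≥ k + 1, so t ≥ 4
    have ht4 : 4 ≤ t := by omega
    set z : V := f (t - 2) with hzdef
    set y : V := f (t - 1) with hydef
    have hznoadj : ∀ i, ¬ D.Adj z (u' i) :=
      fun i => hshort (t - 2) (u' i) (by omega) (hSu' i)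
    have hyu0 : D.Adj y (u' 0) := by
      have := harc (t - 1) (by omega)
      rwa [show t - 1 + 1 = t by omega, hft] at this
    have hzy : D.Adj z y := by
      have := harc (t - 2) (by omega)
      rwa [show t - 2 + 1 = t - 1 by omega] at this
    have hzyne : z ≠ y := hdist (t - 2) (t - 1) (by omega) (by omega)
    have hzu : ∀ i, z ≠ u' i := fun i => hfnotu (t - 2) (by omega) i
    have hyu : ∀ i, y ≠ u' i := fun i => hfnotu (t - 1) (by omega) i
    by_cases hcz : part z = part (u' (k - 2))
    · -- z blocked
      have hpzv : part z ≠ part v := by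
        rw [hcz]; exact (hv' (k - 2)).symm
      have hnvz : ¬ D.Adj v z := by
        rw [← hf0]; exact hchord 0 (t - 2) (by omega) (by omega)
      have hzv : D.Adj z v := hT.adj_of_not hpzv hnvz
      have hu3z : part (u' (k - 3)) ≠ part z := by
        have h1 := hu'.arc (k - 3)
        rw [show k - 3 + 1 = k - 2 by omega] at h1
        have h2 := hT.adj_ne h1
        rw [← hcz] at h2
        exact h2
      have hentz : D.Adj (u' (k - 3)) z := hT.adj_of_not hu3z (hznoadj (k - 3))
      by_cases hcy : part y = part (u' (k - 1))
      · -- doubly blocked: descent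
        have hpyv : part y ≠ part v := by
          rw [hcy]; exact (hv' (k - 1)).symm
        have hnvy : ¬ D.Adj v y := by
          rw [← hf0]; exact hchord 0 (t - 1) (by omega) (by omega)
        have hyv : D.Adj y v := hT.adj_of_not hpyv hnvy
        set h0 : ℕ → V := fun i => if i = 0 then z else if i = 1 then y else u' (i - 2)
          with hh0
        have hA : h0 0 = z := if_pos rfl
        have hB : h0 1 = y := by
          show (if (1:ℕ) = 0 then z else if (1:ℕ) = 1 then y else u' (1 - 2)) = y
          rw [if_neg one_ne_zero, if_pos rfl]
        have hC : ∀ i, i ≠ 0 → i ≠ 1 → h0 i = u' (i - 2) := by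
          intro i h1 h2
          show (if i = 0 then z else if i = 1 then y else u' (i - 2)) = u' (i - 2)
          rw [if_neg h1, if_neg h2]
        have hpc2 : PC D k (fun i => h0 (i % k)) := by
          refine pc_glue D k (by omega) h0 ?_ ?_ ?_
          · intro i j hi hj he
            by_cases h1 : i = 0
            · by_cases h2 : j = 0
              · omega
              · by_cases h4 : j = 1
                · rw [h1, h4, hA, hB] at he
                  exact absurd he hzyne
                · rw [h1, hA, hC j h2 h4] at he
                  exact absurd he (hzu _)
            · by_cases h3 : i = 1
              · by_cases h2 : j = 0
                · rw [h3, h2, hA, hB] at he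
                  exact absurd he.symm hzyne
                · by_cases h4 : j = 1
                  · omega
                  · rw [h3, hB, hC j h2 h4] at he
                    exact absurd he (hyu _)
              · by_cases h2 : j = 0
                · rw [h2, hA, hC i h1 h3] at he
                  exact absurd he.symm (hzu _)
                · by_cases h4 : j = 1
                  · rw [h4, hB, hC i h1 h3] at he
                    exact absurd he.symm (hyu _)
                  · rw [hC i h1 h3, hC j h2 h4] at he
                    have := hu'.inj (i - 2) (j - 2) (by omega) (by omega) he
                    omega
          · intro i hi
            by_cases h1 : i = 0
            · rw [h1, hA, show (0:ℕ) + 1 = 1 by rfl, hB]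
              exact hzy
            · by_cases h2 : i = 1
              · rw [h2, hB, hC 2 (by omega) (by omega), show (2:ℕ) - 2 = 0 by rfl]
                exact hyu0
              · rw [hC i h1 h2, hC (i + 1) (by omega) (by omega),
                  show i + 1 - 2 = (i - 2) + 1 by omega]
                exact hu'.arc (i - 2)
          · rw [hC (k - 1) (by omega) (by omega), hA, show k - 1 - 2 = k - 3 by omega]
            exact hentz
        refine IH (t - 2) (by omega) k hk (fun i => h0 (i % k)) hpc2 v ?_ ?_ ?_
        · intro i
          show part v ≠ part (h0 (i % k))
          by_cases h1 : i % k = 0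
          · rw [h1, hA]; exact hpzv.symm
          · by_cases h2 : i % k = 1
            · rw [h2, hB]; exact hpyv.symm
            · rw [hC _ h1 h2]; exact hv' _
        · intro i
          show D.Adj (h0 (i % k)) v
          by_cases h1 : i % k = 0
          · rw [h1, hA]; exact hzv
          · by_cases h2 : i % k = 1
            · rw [h2, hB]; exact hyv
            · rw [hC _ h1 h2]; exact hCv' _
        · refine ⟨f, hf0, fun i hi => harc i (by omega), 0, ?_⟩
          show f (t - 2) = h0 (0 % k)
          rw [Nat.zero_mod, hA]
      · -- y not blocked
        by_cases hins : D.Adj (u' (k - 1)) y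
        · -- insert y between u'(k-1) and u'0
          set h0 : ℕ → V := fun i => if i ≤ k - 1 then u' i else y with hh0
          have hA : ∀ i, i ≤ k - 1 → h0 i = u' i := fun i hi => if_pos hi
          have hB : ∀ i, ¬ i ≤ k - 1 → h0 i = y := fun i hi => if_neg hi
          have hpc : PC D (k + 1) (fun i => h0 (i % (k + 1))) := by
            refine pc_glue D (k + 1) (by omega) h0 ?_ ?_ ?_
            · intro i j hi hj he
              by_cases h1 : i ≤ k - 1 <;> by_cases h2 : j ≤ k - 1
              · rw [hA i h1, hA j h2] at he
                exact hu'.inj i j (by omega) (by omega) he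
              · rw [hA i h1, hB j h2] at he
                exact absurd he.symm (hyu _)
              · rw [hB i h1, hA j h2] at he
                exact absurd he (hyu _)
              · omega
            · intro i hi
              rcases Nat.lt_or_ge (i + 1) k with h1 | h1
              · rw [hA i (by omega), hA (i + 1) (by omega)]
                exact hu'.arc i
              · rw [hA i (by omega), hB (i + 1) (by omega), show i = k - 1 by omega]
                exact hins
            · rw [hB (k + 1 - 1) (by omega), hA 0 (by omega)]
              exact hyu0
          exact hpc.toHasCycle (by omega)
        · -- y → u'(k-1): cycle u'(k-1) u'k … u'(2k-3) z y
          have hy2 : D.Adj y (u' (k - 1)) := hT.adj_of_not hcy hins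
          set h0 : ℕ → V := fun i => if i ≤ k - 2 then u' (k - 1 + i)
            else if i = k - 1 then z else y with hh0
          have hA : ∀ i, i ≤ k - 2 → h0 i = u' (k - 1 + i) := fun i hi => if_pos hi
          have hB : h0 (k - 1) = z := by
            show (if k - 1 ≤ k - 2 then u' (k - 1 + (k - 1))
              else if k - 1 = k - 1 then z else y) = z
            rw [if_neg (by omega), if_pos rfl]
          have hC : ∀ i, ¬ i ≤ k - 2 → i ≠ k - 1 → h0 i = y := by
            intro i h1 h2
            show (if i ≤ k - 2 then u' (k - 1 + i) else if i = k - 1 then z else y) = y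
            rw [if_neg h1, if_neg h2]
          have hpc : PC D (k + 1) (fun i => h0 (i % (k + 1))) := by
            refine pc_glue D (k + 1) (by omega) h0 ?_ ?_ ?_
            · intro i j hi hj he
              by_cases h1 : i ≤ k - 2
              · by_cases h2 : j ≤ k - 2
                · rw [hA i h1, hA j h2] at he
                  have h5 := (hu'.eq_iff hkpos).mp he
                  have h6 : i ≡ j [MOD k] := Nat.ModEq.add_left_cancel' (k - 1) h5
                  have h7 : i % k = j % k := h6
                  rwa [Nat.mod_eq_of_lt (by omega), Nat.mod_eq_of_lt (by omega)] at h7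
                · by_cases h4 : j = k - 1
                  · rw [hA i h1, h4, hB] at he
                    exact absurd he.symm (hzu _)
                  · rw [hA i h1, hC j h2 h4] at he
                    exact absurd he.symm (hyu _)
              · by_cases h3 : i = k - 1
                · by_cases h2 : j ≤ k - 2
                  · rw [h3, hB, hA j h2] at he
                    exact absurd he (hzu _)
                  · by_cases h4 : j = k - 1
                    · omega
                    · rw [h3, hB, hC j h2 h4] at he
                      exact absurd he hzyne
                · by_cases h2 : j ≤ k - 2
                  · rw [hC i h1 h3, hA j h2] at he
                    exact absurd he (hyu _)
                  · by_cases h4 : j = k - 1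
                    · rw [hC i h1 h3, h4, hB] at he
                      exact absurd he.symm hzyne
                    · omega
            · intro i hi
              rcases Nat.lt_or_ge (i + 1) (k - 1) with h1 | h1
              · rw [hA i (by omega), hA (i + 1) (by omega),
                  show k - 1 + (i + 1) = (k - 1 + i) + 1 by omega]
                exact hu'.arc (k - 1 + i)
              · rcases Nat.eq_or_lt_of_le h1 with h2 | h2
                · rw [hA i (by omega), show i + 1 = k - 1 by omega, hB,
                    show k - 1 + i = k - 3 + k by omega, hu'.period]
                  exact hentz
                · rw [show i = k - 1 by omega, hB, hC (k - 1 + 1) (by omega) (by omega)]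
                  exact hzy
            · rw [hC (k + 1 - 1) (by omega) (by omega), hA 0 (by omega),
                show k - 1 + 0 = k - 1 by omega]
              exact hy2
          exact hpc.toHasCycle (by omega)
    · -- z not blocked: cycle u'0 … u'(k-2) z y
      have hadjz : D.Adj (u' (k - 2)) z :=
        hT.adj_of_not (Ne.symm hcz) (hznoadj (k - 2))
      set h0 : ℕ → V := fun i => if i ≤ k - 2 then u' i else if i = k - 1 then z else y
        with hh0
      have hA : ∀ i, i ≤ k - 2 → h0 i = u' i := fun i hi => if_pos hi
      have hB : h0 (k - 1) = z := by
        show (if k - 1 ≤ k - 2 then u' (k - 1) else if k - 1 = k - 1 then z else y) = z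
        rw [if_neg (by omega), if_pos rfl]
      have hC : ∀ i, ¬ i ≤ k - 2 → i ≠ k - 1 → h0 i = y := by
        intro i h1 h2
        show (if i ≤ k - 2 then u' i else if i = k - 1 then z else y) = y
        rw [if_neg h1, if_neg h2]
      have hpc : PC D (k + 1) (fun i => h0 (i % (k + 1))) := by
        refine pc_glue D (k + 1) (by omega) h0 ?_ ?_ ?_
        · intro i j hi hj he
          by_cases h1 : i ≤ k - 2
          · by_cases h2 : j ≤ k - 2
            · rw [hA i h1, hA j h2] at he
              exact hu'.inj i j (by omega) (by omega) he
            · by_cases h4 : j = k - 1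
              · rw [hA i h1, h4, hB] at he
                exact absurd he.symm (hzu _)
              · rw [hA i h1, hC j h2 h4] at he
                exact absurd he.symm (hyu _)
          · by_cases h3 : i = k - 1
            · by_cases h2 : j ≤ k - 2
              · rw [h3, hB, hA j h2] at he
                exact absurd he (hzu _)
              · by_cases h4 : j = k - 1
                · omega
                · rw [h3, hB, hC j h2 h4] at he
                  exact absurd he hzyne
            · by_cases h2 : j ≤ k - 2
              · rw [hC i h1 h3, hA j h2] at he
                exact absurd he (hyu _)
              · by_cases h4 : j = k - 1
                · rw [hC i h1 h3, h4, hB] at he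
                  exact absurd he.symm hzyne
                · omega
        · intro i hi
          rcases Nat.lt_or_ge (i + 1) (k - 1) with h1 | h1
          · rw [hA i (by omega), hA (i + 1) (by omega)]
            exact hu'.arc i
          · rcases Nat.eq_or_lt_of_le h1 with h2 | h2
            · rw [hA i (by omega), show i + 1 = k - 1 by omega, hB, show i = k - 2 by omega]
              exact hadjz
            · rw [show i = k - 1 by omega, hB, hC (k - 1 + 1) (by omega) (by omega)]
              exact hzy
        · rw [hC (k + 1 - 1) (by omega) (by omega), hA 0 (by omega)]
          exact hyu0
      exact hpc.toHasCycle (by omega)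

end MPTAux
namespace MPTAux

variable {V : Type*}

/-- Key lemma for 3-cycles: if `C` is a two-class `n`-cycle (`n ≥ 4`), `w` is in a
third partite set, every vertex of `C` dominates `w`, and `w` has a walk back to `C`,
then `D` contains a closed triangle. -/
lemma lemB {D : Digraph V} {c : ℕ} {part : V → Fin c} (hT : IsCPT D c part) :
    ∀ T n, 4 ≤ n → ∀ u : ℕ → V, PC D n u →
      (∀ i, part (u i) = part (u 0) ∨ part (u i) = part (u 1)) →
      ∀ w : V, (∀ i, part w ≠ part (u i)) → (∀ i, D.Adj (u i) w) →
      (∃ f : ℕ → V, f 0 = w ∧ (∀ i < T, D.Adj (f i) (f (i + 1))) ∧ ∃ s, f T = u s) →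
      ∃ a b e : V, D.Adj a b ∧ D.Adj b e ∧ D.Adj e a := by
  intro T
  induction T using Nat.strong_induction_on with
  | _ T IH =>
  intro n hn u hu hP w hw hCw hwalk
  obtain ⟨f₀, hf₀0, hf₀arc, s₁, hf₀T⟩ := hwalk
  have hnpos : 0 < n := by omega
  obtain ⟨t, f, htT, hf0, harc, hfS, hnotS, hdist, hchord, hshort⟩ :=
    exists_min_walk D (fun x => ∃ s, x = u s) w T f₀ ⟨hf₀0, hf₀arc, ⟨s₁, hf₀T⟩⟩
  obtain ⟨s₀, hs₀⟩ := hfS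
  set u' : ℕ → V := fun i => u (s₀ + i) with hu'def
  have hu' : PC D n u' := hu.shift s₀
  have hw' : ∀ i, part w ≠ part (u' i) := fun i => hw _
  have hCw' : ∀ i, D.Adj (u' i) w := fun i => hCw _
  have hSu' : ∀ i, ∃ s, u' i = u s := fun i => ⟨s₀ + i, rfl⟩
  have hft : f t = u' 0 := by
    show f t = u (s₀ + 0)
    rw [Nat.add_zero]; exact hs₀
  have hfnotu : ∀ p, p < t → ∀ i, f p ≠ u' i := fun p hp i h => hnotS p hp (h ▸ hSu' i)
  have h01 : part (u' 0) ≠ part (u' 1) := hT.adj_ne (hu'.arc 0)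
  -- the two-class structure transfers to the rotated cycle
  have hcls' : ∀ i, part (u' i) = part (u' 0) ∨ part (u' i) = part (u' 1) := by
    have hm : ∀ i, part (u' i) = part (u 0) ∨ part (u' i) = part (u 1) := fun i => hP _
    intro i
    rcases hm i with h | h <;> rcases hm 0 with h0 | h0 <;> rcases hm 1 with h1 | h1 <;>
      first
        | exact Or.inl (h.trans h0.symm)
        | exact Or.inr (h.trans h1.symm)
        | exact absurd (h0.trans h1.symm) h01
  -- t ≥ 2
  have ht2 : 2 ≤ t := by
    by_contra h
    push_neg at h
    interval_cases t
    · exact hw' 0 (congrArg part (hf0 ▸ hft))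
    · have h1 := harc 0 (by omega)
      rw [hf0, hft] at h1
      exact hT.asymm (hCw' 0) h1
  rcases Nat.eq_or_lt_of_le ht2 with ht2' | ht3
  · -- t = 2 : triangle w, f 1, u' 0
    refine ⟨w, f 1, u' 0, ?_, ?_, hCw' 0⟩
    · rw [← hf0]; exact harc 0 (by omega)
    · have := harc 1 (by omega)
      rwa [show (1:ℕ) + 1 = 2 by rfl, ht2', hft] at this
  · -- t ≥ 3
    set z : V := f (t - 2) with hzdef
    set y : V := f (t - 1) with hydef
    have hznoadj : ∀ i, ¬ D.Adj z (u' i) :=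
      fun i => hshort (t - 2) (u' i) (by omega) (hSu' i)
    have hyu0 : D.Adj y (u' 0) := by
      have := harc (t - 1) (by omega)
      rwa [show t - 1 + 1 = t by omega, hft] at this
    have hzy : D.Adj z y := by
      have := harc (t - 2) (by omega)
      rwa [show t - 2 + 1 = t - 1 by omega] at this
    by_cases hcz : part z = part (u' 0)
    · by_cases hcy : part y = part (u' 1)
      · -- doubly blocked
        have hpyw : part y ≠ part w := by rw [hcy]; exact (hw' 1).symm
        have hnwy : ¬ D.Adj w y := by
          rw [← hf0]; exact hchord 0 (t - 1) (by omega) (by omega)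
        have hyw : D.Adj y w := hT.adj_of_not hpyw hnwy
        rcases Nat.eq_or_lt_of_le ht3 with ht3' | ht4
        · -- t = 3 : triangle w, f 1, f 2
          refine ⟨w, f 1, f 2, ?_, harc 1 (by omega), ?_⟩
          · rw [← hf0]; exact harc 0 (by omega)
          · rwa [show f 2 = y by rw [hydef, ← ht3']] 
        · -- t ≥ 4 : descent
          have hpzw : part z ≠ part w := by rw [hcz]; exact (hw' 0).symm
          have hnwz : ¬ D.Adj w z := by
            rw [← hf0]; exact hchord 0 (t - 2) (by omega) (by omega)
          have hzw : D.Adj z w := hT.adj_of_not hpzw hnwz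
          -- part (u' (n-3)) ≠ part (u' 0)
          have hQ : part (u' (n - 3)) ≠ part (u' 0) := by
            have hb1 : part (u' (n - 1)) ≠ part (u' 0) := by
              have a := hu'.arc (n - 1)
              rw [show n - 1 + 1 = n by omega] at a
              have e : u' n = u' 0 := by
                have := hu'.period 0
                simpa using this
              rw [e] at a
              exact hT.adj_ne a
            have hb2 : part (u' (n - 2)) ≠ part (u' (n - 1)) := by
              have a := hu'.arc (n - 2)
              rw [show n - 2 + 1 = n - 1 by omega] at a
              exact hT.adj_ne a
            have hb3 : part (u' (n - 3)) ≠ part (u' (n - 2)) := by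
              have a := hu'.arc (n - 3)
              rw [show n - 3 + 1 = n - 2 by omega] at a
              exact hT.adj_ne a
            have e1 : part (u' (n - 1)) = part (u' 1) := by
              rcases hcls' (n - 1) with h | h
              · exact absurd h hb1
              · exact h
            have e2 : part (u' (n - 2)) = part (u' 0) := by
              rcases hcls' (n - 2) with h | h
              · exact h
              · exact absurd (h.trans e1.symm) hb2
            have e3 : part (u' (n - 3)) = part (u' 1) := by
              rcases hcls' (n - 3) with h | h
              · exact absurd (h.trans e2.symm) hb3
              · exact h
            rw [e3]
            exact h01.symm
          have hznu : part (u' (n - 3)) ≠ part z := by rw [hcz]; exact hQ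
          have hentz : D.Adj (u' (n - 3)) z := hT.adj_of_not hznu (hznoadj (n - 3))
          set h0 : ℕ → V := fun i => if i = 0 then z else if i = 1 then y else u' (i - 2)
            with hh0
          have hA : h0 0 = z := if_pos rfl
          have hB : h0 1 = y := by
            show (if (1:ℕ) = 0 then z else if (1:ℕ) = 1 then y else u' (1 - 2)) = y
            rw [if_neg one_ne_zero, if_pos rfl]
          have hC : ∀ i, i ≠ 0 → i ≠ 1 → h0 i = u' (i - 2) := by
            intro i h1 h2
            show (if i = 0 then z else if i = 1 then y else u' (i - 2)) = u' (i - 2)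
            rw [if_neg h1, if_neg h2]
          have hzyne : z ≠ y := hdist (t - 2) (t - 1) (by omega) (by omega)
          have hzu : ∀ i, z ≠ u' i := fun i => hfnotu (t - 2) (by omega) i
          have hyu : ∀ i, y ≠ u' i := fun i => hfnotu (t - 1) (by omega) i
          have hpc2 : PC D n (fun i => h0 (i % n)) := by
            refine pc_glue D n (by omega) h0 ?_ ?_ ?_
            · intro i j hi hj he
              by_cases h1 : i = 0
              · by_cases h2 : j = 0
                · omega
                · by_cases h4 : j = 1
                  · rw [h1, h4, hA, hB] at he
                    exact absurd he hzyne
                  · rw [h1, hA, hC j h2 h4] at he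
                    exact absurd he (hzu _)
              · by_cases h3 : i = 1
                · by_cases h2 : j = 0
                  · rw [h3, h2, hA, hB] at he
                    exact absurd he.symm hzyne
                  · by_cases h4 : j = 1
                    · omega
                    · rw [h3, hB, hC j h2 h4] at he
                      exact absurd he (hyu _)
                · by_cases h2 : j = 0
                  · rw [h2, hA, hC i h1 h3] at he
                    exact absurd he.symm (hzu _)
                  · by_cases h4 : j = 1
                    · rw [h4, hB, hC i h1 h3] at he
                      exact absurd he.symm (hyu _)
                    · rw [hC i h1 h3, hC j h2 h4] at he
                      have := hu'.inj (i - 2) (j - 2) (by omega) (by omega) he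
                      omega
            · intro i hi
              by_cases h1 : i = 0
              · rw [h1, hA, show (0:ℕ) + 1 = 1 by rfl, hB]
                exact hzy
              · by_cases h2 : i = 1
                · rw [h2, hB, hC 2 (by omega) (by omega), show (2:ℕ) - 2 = 0 by rfl]
                  exact hyu0
                · rw [hC i h1 h2, hC (i + 1) (by omega) (by omega),
                    show i + 1 - 2 = (i - 2) + 1 by omega]
                  exact hu'.arc (i - 2)
            · rw [hC (n - 1) (by omega) (by omega), hA, show n - 1 - 2 = n - 3 by omega]
              exact hentz
          refine IH (t - 2) (by omega) n hn (fun i => h0 (i % n)) hpc2 ?_ w ?_ ?_ ?_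
          · -- two-class for the new cycle
            intro i
            show part (h0 (i % n)) = part (h0 (0 % n)) ∨ part (h0 (i % n)) = part (h0 (1 % n))
            rw [Nat.zero_mod, Nat.mod_eq_of_lt (show 1 < n by omega), hA, hB]
            by_cases h1 : i % n = 0
            · rw [h1, hA]; exact Or.inl rfl
            · by_cases h2 : i % n = 1
              · rw [h2, hB]; exact Or.inr rfl
              · rw [hC _ h1 h2, hcz, hcy]
                exact hcls' _
          · intro i
            show part w ≠ part (h0 (i % n))
            by_cases h1 : i % n = 0
            · rw [h1, hA, hcz]; exact hw' 0
            · by_cases h2 : i % n = 1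
              · rw [h2, hB, hcy]; exact hw' 1
              · rw [hC _ h1 h2]; exact hw' _
          · intro i
            show D.Adj (h0 (i % n)) w
            by_cases h1 : i % n = 0
            · rw [h1, hA]; exact hzw
            · by_cases h2 : i % n = 1
              · rw [h2, hB]; exact hyw
              · rw [hC _ h1 h2]; exact hCw' _
          · refine ⟨f, hf0, fun i hi => harc i (by omega), 0, ?_⟩
            show f (t - 2) = h0 (0 % n)
            rw [Nat.zero_mod, hA]
      · -- part y ≠ part (u' 1)
        by_cases hins : D.Adj (u' 1) y
        · exact ⟨y, u' 0, u' 1, hyu0, hu'.arc 0, hins⟩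
        · have hy1 : D.Adj y (u' 1) := hT.adj_of_not hcy hins
          have hu1z : D.Adj (u' 1) z := by
            refine hT.adj_of_not ?_ (hznoadj 1)
            rw [hcz]
            exact h01.symm
          exact ⟨u' 1, z, y, hu1z, hzy, hy1⟩
    · -- part z ≠ part (u' 0) : triangle u'0 z y
      have h1 : D.Adj (u' 0) z := hT.adj_of_not (Ne.symm hcz) (hznoadj 0)
      exact ⟨u' 0, z, y, h1, hzy, hyu0⟩

end MPTAux
namespace MPTAux

variable {V : Type*}

/-- Every strong `c`-partite tournament with `c ≥ 3` has a 3-cycle. -/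
lemma base3 {D : Digraph V} {c : ℕ} {part : V → Fin c} (hT : IsCPT D c part)
    (hc : 3 ≤ c) (hS : IsStrong D) : HasCycle D 3 := by
  classical
  set W : Set ℕ :=
    {m | 1 ≤ m ∧ ∃ f : ℕ → V, f 0 = f m ∧ ∀ i < m, D.Adj (f i) (f (i + 1))} with hWdef
  obtain ⟨a, ha⟩ := hT.part_surj ⟨0, by omega⟩
  obtain ⟨b, hb⟩ := hT.part_surj ⟨1, by omega⟩
  have hab : part a ≠ part b := by
    rw [ha, hb]
    intro h
    simp [Fin.ext_iff] at h
  have build : ∀ x y : V, D.Adj x y → x ≠ y → W.Nonempty := by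
    intro x y hxy hne
    obtain ⟨m, g, hg0, hgm, hgarc⟩ := hS y x (Ne.symm hne)
    refine ⟨m + 1, by omega, fun i => if i = 0 then x else g (i - 1), ?_, ?_⟩
    · show (if (0:ℕ) = 0 then x else g (0 - 1)) = (if m + 1 = 0 then x else g (m + 1 - 1))
      rw [if_pos rfl, if_neg (Nat.succ_ne_zero m), show m + 1 - 1 = m from rfl, hgm]
    · intro i hi
      by_cases h : i = 0
      · subst h
        show D.Adj (if (0:ℕ) = 0 then x else g (0 - 1)) (if (1:ℕ) = 0 then x else g (1 - 1))
        rw [if_pos rfl, if_neg one_ne_zero, show (1:ℕ) - 1 = 0 from rfl, hg0]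
        exact hxy
      · show D.Adj (if i = 0 then x else g (i - 1)) (if i + 1 = 0 then x else g (i + 1 - 1))
        rw [if_neg h, if_neg (by omega)]
        have := hgarc (i - 1) (by omega)
        rwa [show i - 1 + 1 = i + 1 - 1 by omega] at this
  have hWne : W.Nonempty := by
    rcases hT.xor_adj a b hab with ⟨h, _⟩ | ⟨h, _⟩
    · exact build a b h (fun he => hab (congrArg part he))
    · exact build b a h (fun he => hab.symm (congrArg part he))
  set nn := sInf W with hnn
  have hmem : nn ∈ W := Nat.sInf_mem hWne
  have hmem' : 1 ≤ nn ∧ ∃ f : ℕ → V, f 0 = f nn ∧ ∀ i < nn, D.Adj (f i) (f (i + 1)) := hmem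
  obtain ⟨hn1, f, hclosed, harc⟩ := hmem'
  have hmin : ∀ m, m < nn →
      ¬ (1 ≤ m ∧ ∃ f : ℕ → V, f 0 = f m ∧ ∀ i < m, D.Adj (f i) (f (i + 1))) :=
    fun m hm h => Nat.notMem_of_lt_sInf hm h
  have hn3 : 3 ≤ nn := by
    by_contra h
    push_neg at h
    have : nn = 1 ∨ nn = 2 := by omega
    rcases this with h1 | h1
    · have ha1 := harc 0 (by omega)
      rw [h1] at hclosed
      rw [← hclosed] at ha1
      exact hT.not_adj_of_same _ _ rfl ha1
    · have ha1 := harc 0 (by omega)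
      have ha2 := harc 1 (by omega)
      rw [h1] at hclosed
      rw [show (1:ℕ) + 1 = 2 from rfl, ← hclosed] at ha2
      exact hT.asymm ha1 ha2
  have hinj : ∀ p q, p < q → q ≤ nn → ¬ (p = 0 ∧ q = nn) → f p ≠ f q := by
    intro p q hpq hq hne heq
    have hnot : ¬ (q - p < nn) := by
      intro hlt
      refine hmin (q - p) hlt ⟨by omega, fun i => f (p + i), ?_, fun i hi => harc (p + i) (by omega)⟩
      show f (p + 0) = f (p + (q - p))
      rw [Nat.add_zero, show p + (q - p) = q by omega]
      exact heq
    exact hne ⟨by omega, by omega⟩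
  have hu : PC D nn (fun i => f (i % nn)) := by
    refine pc_glue D nn (by omega) f ?_ (fun i hi => harc i (by omega)) ?_
    · intro i j hi hj he
      rcases Nat.lt_trichotomy i j with h | h | h
      · exact absurd he (hinj i j h (by omega) (fun hh => by omega))
      · exact h
      · exact absurd he.symm (hinj j i h (by omega) (fun hh => by omega))
    · have := harc (nn - 1) (by omega)
      rwa [show nn - 1 + 1 = nn by omega, ← hclosed] at this
  set u : ℕ → V := fun i => f (i % nn) with hudef
  rcases Nat.eq_or_lt_of_le hn3 with h3 | h4
  · have := hu.toHasCycle (by omega)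
    rwa [← h3] at this
  · exfalso
    have hW3 : (∃ x y e : V, D.Adj x y ∧ D.Adj y e ∧ D.Adj e x) → False := by
      rintro ⟨x, y, e, h1, h2, h3⟩
      refine hmin 3 (by omega) ⟨by omega,
        fun i => if i = 0 then x else if i = 1 then y else if i = 2 then e else x, ?_, ?_⟩
      · norm_num
      · intro i hi
        have : i = 0 ∨ i = 1 ∨ i = 2 := by omega
        rcases this with h | h | h <;> subst h <;> norm_num
        · exact h1
        · exact h2
        · exact h3
    have hWn1 : ∀ i : ℕ, D.Adj (u i) (u (i + 2)) → False := by
      intro i hadj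
      refine hmin (nn - 1) (by omega) ⟨by omega,
        fun s => if s = 0 then u i else u (i + 1 + s), ?_, ?_⟩
      · show (if (0:ℕ) = 0 then u i else _) = (if nn - 1 = 0 then u i else u (i + 1 + (nn - 1)))
        rw [if_pos rfl, if_neg (by omega), show i + 1 + (nn - 1) = i + nn by omega, hu.period]
      · intro s hs
        by_cases h : s = 0
        · subst h
          show D.Adj (if (0:ℕ) = 0 then u i else _) (if (1:ℕ) = 0 then u i else u (i + 1 + 1))
          rw [if_pos rfl, if_neg one_ne_zero]
          exact hadj
        · show D.Adj (if s = 0 then u i else u (i + 1 + s))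
            (if s + 1 = 0 then u i else u (i + 1 + (s + 1)))
          rw [if_neg h, if_neg (by omega), show i + 1 + (s + 1) = (i + 1 + s) + 1 by omega]
          exact hu.arc (i + 1 + s)
    have hstepa : ∀ i, part (u i) = part (u (i + 2)) := by
      intro i
      by_contra hne
      rcases hT.xor_adj (u i) (u (i + 2)) hne with ⟨h, _⟩ | ⟨h, _⟩
      · exact hWn1 i h
      · exact hW3 ⟨u i, u (i + 1), u (i + 2), hu.arc i, hu.arc (i + 1), h⟩
    have hiter : ∀ m i, part (u (i + 2 * m)) = part (u i) := by
      intro m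
      induction m with
      | zero => simp
      | succ m ih =>
        intro i
        have e : i + 2 * (m + 1) = (i + 2 * m) + 2 := by ring
        rw [e]
        exact (hstepa (i + 2 * m)).symm.trans (ih i)
    have hcls : ∀ i, part (u i) = part (u 0) ∨ part (u i) = part (u 1) := by
      intro i
      have e : i = i % 2 + 2 * (i / 2) := by omega
      have h2 := hiter (i / 2) (i % 2)
      rw [← e] at h2
      have : i % 2 = 0 ∨ i % 2 = 1 := by omega
      rcases this with h | h
      · left; rw [h2, h]
      · right; rw [h2, h]
    obtain ⟨p, hp⟩ := exists_avoid 2 (by omega)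
      (fun i => if i = 0 then part (u 0) else part (u 1))
    have hp0 : part (u 0) ≠ p := by
      have := hp 0 (by omega)
      simpa using this
    have hp1 : part (u 1) ≠ p := by
      have := hp 1 (by omega)
      simpa using this
    obtain ⟨w, hwp⟩ := hT.part_surj p
    have hw : ∀ i, part w ≠ part (u i) := by
      intro i
      rw [hwp]
      rcases hcls i with h | h
      · rw [h]; exact Ne.symm hp0
      · rw [h]; exact Ne.symm hp1
    set ε : ℕ → Prop := fun i => D.Adj (u i) w with hε
    have hper : ∀ i, ε (i + nn) ↔ ε i := by
      intro i
      show D.Adj (u (i + nn)) w ↔ D.Adj (u i) w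
      rw [hu.period]
    by_cases hall : ∀ i, ε i
    · have hwne : w ≠ u 0 := fun h => hw 0 (congrArg part h)
      obtain ⟨m, g, hg0, hgm, hgarc⟩ := hS w (u 0) hwne
      exact hW3 (lemB hT m nn (by omega) u hu hcls w hw hall ⟨g, hg0, hgarc, 0, hgm⟩)
    · push_neg at hall
      obtain ⟨b₀, hb₀⟩ := hall
      by_cases hall2 : ∀ i, ¬ ε i
      · -- w dominates the cycle: work in the reversal
        have hrev : PC (DRev D) nn (fun i => u (nn - i % nn)) := hu.rev (by omega)
        have e0 : u (nn - 0 % nn) = u 0 := by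
          rw [Nat.zero_mod, Nat.sub_zero]
          have := hu.period 0
          simpa using this
        have e1 : part (u (nn - 1 % nn)) = part (u 1) := by
          rw [Nat.mod_eq_of_lt (show 1 < nn by omega)]
          have hb1 : part (u (nn - 1)) ≠ part (u 0) := by
            have aa := hu.arc (nn - 1)
            rw [show nn - 1 + 1 = nn by omega] at aa
            have e : u nn = u 0 := by
              have := hu.period 0
              simpa using this
            rw [e] at aa
            exact hT.adj_ne aa
          rcases hcls (nn - 1) with h | h
          · exact absurd h hb1
          · exact h
        have hclsr : ∀ i, part (u (nn - i % nn)) = part (u (nn - 0 % nn)) ∨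
            part (u (nn - i % nn)) = part (u (nn - 1 % nn)) := by
          intro i
          rcases hcls (nn - i % nn) with h | h
          · left; rw [e0]; exact h
          · right; rw [e1]; exact h
        have hwr : ∀ i, part w ≠ part (u (nn - i % nn)) := fun i => hw _
        have hCwr : ∀ i, (DRev D).Adj (u (nn - i % nn)) w :=
          fun i => hT.adj_of_not (hw _) (hall2 _)
        obtain ⟨m, g, hg0, hgm, hgarc⟩ := hS (u 0) w (fun h => hw 0 (congrArg part h.symm))
        have hwalkr : ∃ gr : ℕ → V, gr 0 = w ∧ (∀ i < m, (DRev D).Adj (gr i) (gr (i + 1))) ∧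
            ∃ s, gr m = u (nn - s % nn) := by
          refine ⟨fun i => g (m - i), by show g (m - 0) = w; rw [Nat.sub_zero, hgm], ?_, 0, ?_⟩
          · intro i hi
            show D.Adj (g (m - (i + 1))) (g (m - i))
            have h' := hgarc (m - i - 1) (by omega)
            rw [show m - i - 1 + 1 = m - i by omega] at h'
            rw [show m - (i + 1) = m - i - 1 by omega]
            exact h'
          · show g (m - m) = u (nn - 0 % nn)
            rw [Nat.sub_self, hg0, e0]
        obtain ⟨x, y, e, h1, h2, h3⟩ := lemB hT.rev m nn (by omega) _ hrev hclsr w hwr hCwr hwalkr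
        exact hW3 ⟨x, e, y, h3, h2, h1⟩
      · push_neg at hall2
        obtain ⟨a₀, ha₀⟩ := hall2
        obtain ⟨i, h1, h2⟩ := trans_up hper (by omega) hb₀ ha₀
        have hwi : D.Adj w (u i) := hT.adj_of_not (hw i) h1
        exact hW3 ⟨w, u i, u (i + 1), hwi, hu.arc i, h2⟩

/-- The inductive step: a `k`-cycle (`3 ≤ k < c`) can be extended to a `(k+1)`-cycle. -/
lemma step {D : Digraph V} {c : ℕ} {part : V → Fin c} (hT : IsCPT D c part)
    (hS : IsStrong D) {k : ℕ} (hk : 3 ≤ k) (hkc : k < c) (h : HasCycle D k) :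
    HasCycle D (k + 1) := by
  classical
  obtain ⟨g, hginj, hgarc⟩ := h
  have hu : PC D k (fun i : ℕ => g (i : ZMod k)) := PC.ofHasCycle (by omega) hginj hgarc
  set u : ℕ → V := fun i : ℕ => g (i : ZMod k) with hudef
  obtain ⟨p, hp⟩ := exists_avoid k hkc (fun i => part (u i))
  obtain ⟨v, hvp⟩ := hT.part_surj p
  have hv : ∀ i, part v ≠ part (u i) := by
    intro i
    have e : u i = u (i % k) := hu.mod i
    rw [hvp, e]
    exact (hp (i % k) (Nat.mod_lt _ (by omega))).symm
  set ε : ℕ → Prop := fun i => D.Adj (u i) v with hε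
  have hper : ∀ i, ε (i + k) ↔ ε i := by
    intro i
    show D.Adj (u (i + k)) v ↔ D.Adj (u i) v
    rw [hu.period]
  by_cases hall : ∀ i, ε i
  · have hvne : v ≠ u 0 := fun h => hv 0 (congrArg part h)
    obtain ⟨m, g', hg0, hgm, hgarc'⟩ := hS v (u 0) hvne
    exact lemA hT m k hk u hu v hv hall ⟨g', hg0, hgarc', 0, hgm⟩
  · push_neg at hall
    obtain ⟨b₀, hb₀⟩ := hall
    by_cases hall2 : ∀ i, ¬ ε i
    · -- v dominates the cycle: work in the reversal
      have hrev : PC (DRev D) k (fun i => u (k - i % k)) := hu.rev (by omega)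
      have e0 : u (k - 0 % k) = u 0 := by
        rw [Nat.zero_mod, Nat.sub_zero]
        have := hu.period 0
        simpa using this
      have hvr : ∀ i, part v ≠ part (u (k - i % k)) := fun i => hv _
      have hCvr : ∀ i, (DRev D).Adj (u (k - i % k)) v :=
        fun i => hT.adj_of_not (hv _) (hall2 _)
      obtain ⟨m, g', hg0, hgm, hgarc'⟩ := hS (u 0) v (fun h => hv 0 (congrArg part h.symm))
      have hwalkr : ∃ gr : ℕ → V, gr 0 = v ∧ (∀ i < m, (DRev D).Adj (gr i) (gr (i + 1))) ∧
          ∃ s, gr m = u (k - s % k) := by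
        refine ⟨fun i => g' (m - i), by show g' (m - 0) = v; rw [Nat.sub_zero, hgm], ?_, 0, ?_⟩
        · intro i hi
          show D.Adj (g' (m - (i + 1))) (g' (m - i))
          have h' := hgarc' (m - i - 1) (by omega)
          rw [show m - i - 1 + 1 = m - i by omega] at h'
          rw [show m - (i + 1) = m - i - 1 by omega]
          exact h'
        · show g' (m - m) = u (k - 0 % k)
          rw [Nat.sub_self, hg0, e0]
      exact hasCycle_rev (lemA hT.rev m k hk _ hrev v hvr hCvr hwalkr)
    · push_neg at hall2
      obtain ⟨a₀, ha₀⟩ := hall2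
      obtain ⟨i, h1, h2⟩ := trans_down hper (by omega) hb₀ ha₀
      have hvout : D.Adj v (u (i + 1)) := hT.adj_of_not (hv (i + 1)) h2
      set u' : ℕ → V := fun j => u ((i + 1) + j) with hu'def
      have hu' : PC D k u' := hu.shift (i + 1)
      set h0 : ℕ → V := fun j => if j ≤ k - 1 then u' j else v with hh0
      have hA : ∀ j, j ≤ k - 1 → h0 j = u' j := fun j hj => if_pos hj
      have hB : ∀ j, ¬ j ≤ k - 1 → h0 j = v := fun j hj => if_neg hj
      have hvne' : ∀ j, v ≠ u' j := fun j h => hv _ (congrArg part h)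
      have hpc : PC D (k + 1) (fun j => h0 (j % (k + 1))) := by
        refine pc_glue D (k + 1) (by omega) h0 ?_ ?_ ?_
        · intro x y hx hy he
          by_cases h1' : x ≤ k - 1 <;> by_cases h2' : y ≤ k - 1
          · rw [hA x h1', hA y h2'] at he
            exact hu'.inj x y (by omega) (by omega) he
          · rw [hA x h1', hB y h2'] at he
            exact absurd he.symm (hvne' _)
          · rw [hB x h1', hA y h2'] at he
            exact absurd he (hvne' _)
          · omega
        · intro j hj
          rcases Nat.lt_or_ge (j + 1) k with h1' | h1'
          · rw [hA j (by omega), hA (j + 1) (by omega)]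
            exact hu'.arc j
          · rw [hA j (by omega), hB (j + 1) (by omega)]
            show D.Adj (u ((i + 1) + j)) v
            rw [show (i + 1) + j = i + k by omega, hu.period]
            exact h1
        · rw [hB (k + 1 - 1) (by omega), hA 0 (by omega)]
          show D.Adj v (u ((i + 1) + 0))
          rw [Nat.add_zero]
          exact hvout
      exact hpc.toHasCycle (by omega)

end MPTAux


/-- Bondy: every strong `c`-partite tournament (`c ≥ 3`) contains a
`k`-cycle for every `3 ≤ k ≤ c`. -/


theorem stmt_10 {V : Type*} (c : ℕ) (hc : 3 ≤ c) (D : Digraph V) (part : V → Fin c)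
    (hT : IsCPT D c part) (hS : IsStrong D) :
    ∀ k : ℕ, 3 ≤ k → k ≤ c → HasCycle D k := by
  intro k hk3
  induction k, hk3 using Nat.le_induction with
  | base => exact fun _ => MPTAux.base3 hT hc hS
  | succ n hn ih =>
    intro hnc
    exact MPTAux.step hT hS hn (by omega) (ih (by omega))
end

section
/- Let c ≥ 5 and let D be a rich c-partite tournament. Then D contains a q-cycle for some q > c. -/
/-!
Let `C` be a longest cycle and suppose `|C| ≤ c`. A vertex outside `C` that is adjacent to every
vertex of `C` either fits between two consecutive vertices of `C`, or all arcs between it and `C`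
point the same way; then a shortest path from it back to `C` (or from `C` to it) closes a longer
cycle. So `C` meets every partite set, hence exactly once. By richness each `x ∈ C` has a twin
`w x ∉ C` in its partite set, and the same argument shows that `w x` dominates the successor and
is dominated by the predecessor of `x`. If some arc `x → y` of `C` has `w y → w x`, then
`x → w y → w x → y` lengthens `C`; otherwise `w` maps `C` onto a disjoint cycle, and the arcs
`x → w y`, `w x → y` splice the two into a cycle of length `2|C|`. Reversing all arcs exchanges
"dominates" and "is dominated by", so each of these facts is proved only once.
-/

open List Relation

theorem List.exists_append_cons_cons_of_mem {α : Type*} {P : α → Prop} {a b : α} {l : List α}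
    (ha : P a) (hb : b ∈ l) (hPb : ¬ P b) :
    ∃ l₁ x y l₂, a :: l = l₁ ++ x :: y :: l₂ ∧ P x ∧ ¬ P y := by
  by_contra! h
  have hch : IsChain (fun x y => P x → P y) (a :: l) :=
    isChain_iff_forall_rel_of_append_cons_cons.2 fun x y l₁ l₂ e => h l₁ x y l₂ e
  exact hPb (hch.cons_induction _ _ (fun _ _ h => h) ha b hb)

theorem List.IsChain.concat {α : Type*} {r : α → α → Prop} {l : List α} {b : α}
    (h : IsChain r l) (hb : ∀ a ∈ l.getLast?, r a b) : IsChain r (l ++ [b]) :=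
  h.append (isChain_singleton b) (by simpa using hb)

namespace Cycle

variable {α : Type*} {r : α → α → Prop} {s : Cycle α}

theorem coe_append_comm (l₁ l₂ : List α) : (↑(l₁ ++ l₂) : Cycle α) = ↑(l₂ ++ l₁) :=
  coe_eq_coe.2 isRotated_append

theorem exists_eq_coe_cons_of_mem {a : α} (h : a ∈ s) : ∃ l : List α, s = ↑(a :: l) := by
  obtain ⟨L, rfl⟩ : ∃ L : List α, (L : Cycle α) = s := Quot.exists_rep s
  obtain ⟨l₁, l₂, rfl⟩ := append_of_mem (mem_coe_iff.1 h)
  exact ⟨l₂ ++ l₁, coe_append_comm _ _⟩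

theorem exists_eq_coe_cons_cons (h2 : 2 ≤ s.length) :
    ∃ x y l, s = ((x :: y :: l : List α) : Cycle α) := by
  obtain ⟨L, rfl⟩ : ∃ L : List α, (L : Cycle α) = s := Quot.exists_rep s
  match L, h2 with
  | x :: y :: l, _ => exact ⟨x, y, l, rfl⟩

theorem chain_coe_cons_append_cons {a b : α} {l₁ l₂ : List α} :
    Chain r ↑(a :: (l₁ ++ b :: l₂)) ↔
      IsChain r (a :: (l₁ ++ [b])) ∧ IsChain r (b :: (l₂ ++ [a])) := by
  rw [chain_coe_cons, List.append_assoc, List.cons_append]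
  exact isChain_cons_split

theorem chain_of_forall_eq_coe_cons_cons (h2 : 2 ≤ s.length)
    (h : ∀ x y l, s = ↑(x :: y :: l) → r x y) : Chain r s := by
  obtain ⟨a, b, l, rfl⟩ := exists_eq_coe_cons_cons h2
  rw [chain_coe_cons]
  refine isChain_iff_forall_rel_of_append_cons_cons.2 fun x y l₁ l₂ e => ?_
  rcases eq_nil_or_concat' l₂ with rfl | ⟨l₂, c, rfl⟩
  · obtain ⟨he, hy⟩ := append_inj' (s₁ := a :: b :: l) (s₂ := l₁ ++ [x]) (t₁ := [a]) (t₂ := [y])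
      (by simpa using e) rfl
    obtain rfl : a = y := by simpa using hy
    rcases l₁ with _ | ⟨d, l₁⟩
    · simp at he
    · obtain rfl : d = a := (cons_eq_cons.1 he).1.symm
      exact h x _ l₁ (by rw [he, coe_append_comm]; rfl)
  · obtain ⟨he, -⟩ := append_inj' (s₁ := a :: b :: l) (s₂ := l₁ ++ x :: y :: l₂)
      (t₁ := [a]) (t₂ := [c]) (by simpa using e) rfl
    exact h x y (l₂ ++ l₁) (by rw [he, coe_append_comm]; rfl)

theorem chain_reverse_iff : Chain r s.reverse ↔ Chain (flip r) s := by
  obtain ⟨L, rfl⟩ : ∃ L : List α, (L : Cycle α) = s := Quot.exists_rep s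
  rcases L with _ | ⟨a, l⟩
  · simp
  · rw [reverse_coe, List.reverse_cons, ← coe_cons_eq_coe_append, chain_coe_cons, chain_coe_cons,
      ← isChain_reverse]
    simp
    rfl

theorem reverse_coe_cons_cons (x y : α) (l : List α) :
    (↑(x :: y :: l) : Cycle α).reverse = ↑(y :: x :: l.reverse) := by
  rw [reverse_coe, reverse_cons, reverse_cons, append_assoc, coe_append_comm]
  rfl

theorem injOn_of_length_le_card {β : Type*} [Fintype β] {f : α → β}
    (hlen : s.length ≤ Fintype.card β) (hsurj : ∀ b, ∃ a ∈ s, f a = b) :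
    ∀ a ∈ s, ∀ a' ∈ s, f a = f a' → a = a' := by
  classical
  obtain ⟨L, rfl⟩ : ∃ L : List α, (L : Cycle α) = s := Quot.exists_rep s
  simp only [mem_coe_iff, length_coe] at hlen hsurj ⊢
  have hinj := Finset.injOn_of_surjOn_of_card_le (s := L.toFinset) (t := Finset.univ) f
    (fun _ _ => Finset.mem_coe.2 (Finset.mem_univ _))
    (fun b _ => by obtain ⟨a, ha, rfl⟩ := hsurj b; exact ⟨a, by simpa using ha, rfl⟩)
    (L.toFinset_card_le.trans (by simpa using hlen))
  exact fun a ha a' ha' h => hinj (by simpa using ha) (by simpa using ha') h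

end Cycle

namespace MPT

section Relation

variable {α : Type*} {r : α → α → Prop}

/-- Cycles are Mathlib's `Cycle`s (lists up to rotation); `x` followed by `y` on `s` is
expressed as `s = ↑(x :: y :: l)`. -/
def HasCycleLongerThan (r : α → α → Prop) (n : ℕ) : Prop :=
  ∃ s : Cycle α, s.Nodup ∧ s.Chain r ∧ n < s.length

theorem HasCycleLongerThan.mono {m n : ℕ} (h : HasCycleLongerThan r n) (hmn : m ≤ n) :
    HasCycleLongerThan r m :=
  h.imp fun _ ⟨hs, hC, hn⟩ => ⟨hs, hC, by omega⟩

theorem HasCycleLongerThan.of_flip {n : ℕ} (h : HasCycleLongerThan (flip r) n) :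
    HasCycleLongerThan r n := by
  obtain ⟨s, hs, hC, hn⟩ := h
  exact ⟨s.reverse, Cycle.nodup_reverse_iff.2 hs, Cycle.chain_reverse_iff.2 hC,
    by rwa [Cycle.length_reverse]⟩

theorem hasCycleLongerThan_of_isChain {a b : α} {l₁ l₂ : List α} {n : ℕ}
    (h₁ : IsChain r (a :: (l₁ ++ [b]))) (h₂ : IsChain r (b :: (l₂ ++ [a])))
    (hnd : (a :: (l₁ ++ b :: l₂)).Nodup) (hn : n < l₁.length + l₂.length + 2) :
    HasCycleLongerThan r n :=
  ⟨_, Cycle.nodup_coe_iff.2 hnd, Cycle.chain_coe_cons_append_cons.2 ⟨h₁, h₂⟩, by simp; omega⟩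

theorem exists_path_into_of_reflTransGen {S : Set α} {v z : α} (hv : v ∉ S) (hz : z ∈ S)
    (h : ReflTransGen r v z) :
    ∃ t u, u ∈ S ∧ IsChain r (v :: (t ++ [u])) ∧ (v :: t).Nodup ∧ ∀ y ∈ v :: t, y ∉ S := by
  induction h using Relation.ReflTransGen.head_induction_on with
  | refl => exact absurd hz hv
  | @head v w hvw _ ih =>
    by_cases hw : w ∈ S
    · exact ⟨[], w, hw, isChain_pair.2 hvw, nodup_singleton v, by simpa using hv⟩
    obtain ⟨t, u, hu, hch, hnd, hoff⟩ := ih hw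
    by_cases hvt : v ∈ w :: t
    · obtain ⟨p, q, hpq⟩ := append_of_mem hvt
      refine ⟨q, u, hu, ?_, (hpq ▸ hnd).of_append_right,
        fun y hy => hoff y (hpq ▸ mem_append_right p hy)⟩
      rw [← cons_append, hpq, append_assoc] at hch
      exact hch.right_of_append
    · exact ⟨w :: t, u, hu, hch.cons_cons hvw, nodup_cons.2 ⟨hvt, hnd⟩,
        forall_mem_cons.2 ⟨hv, hoff⟩⟩

theorem hasCycleLongerThan_of_insert {s : Cycle α} {x y : α} {l P : List α} (hs : s.Nodup)
    (hC : s.Chain r) (hxy : s = ↑(x :: y :: l)) (hP : IsChain r (x :: (P ++ [y])))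
    (hPnd : P.Nodup) (hPs : ∀ z ∈ P, z ∉ s) (hne : P ≠ []) :
    HasCycleLongerThan r s.length := by
  subst hxy
  simp only [Cycle.nodup_coe_iff, Cycle.mem_coe_iff, Cycle.chain_coe_cons] at hs hC hPs
  refine hasCycleLongerThan_of_isChain hP hC.tail
    (perm_middle.nodup_iff.1 (hPnd.append hs fun z hzP hzs => hPs z hzP hzs)) ?_
  have := length_pos_of_ne_nil hne
  simp only [Cycle.length_coe, length_cons]
  omega

theorem hasCycleLongerThan_of_insert_vertex {s : Cycle α} {x y v : α} {l : List α}
    (hs : s.Nodup) (hC : s.Chain r) (hxy : s = ↑(x :: y :: l)) (hv : v ∉ s) (hxv : r x v)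
    (hvy : r v y) : HasCycleLongerThan r s.length :=
  hasCycleLongerThan_of_insert hs hC hxy (by simp [hxv, hvy]) (nodup_singleton v)
    (by simpa using hv) (cons_ne_nil _ _)

theorem hasCycleLongerThan_of_forall_ne_rel {s : Cycle α} {v x : α}
    (hr : ∀ a b, r a b → ¬ r b a) (hs : s.Nodup) (hC : s.Chain r) (h2 : 2 ≤ s.length)
    (hv : v ∉ s) (hreach : ∃ z ∈ s, ReflTransGen r v z) (hin : ∀ z ∈ s, z ≠ x → r z v) :
    HasCycleLongerThan r s.length := by
  obtain ⟨z, hz, hvz⟩ := hreach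
  obtain ⟨t, u, hu, hpath, hnd, hoff⟩ :=
    exists_path_into_of_reflTransGen (S := {y | y ∈ s}) hv hz hvz
  obtain ⟨K, rfl⟩ := Cycle.exists_eq_coe_cons_of_mem hu
  obtain ⟨L, p, rfl⟩ : ∃ L p, K = L ++ [p] :=
    (eq_nil_or_concat' K).resolve_left (by rintro rfl; simp at h2)
  simp only [Cycle.nodup_coe_iff, Cycle.mem_coe_iff, Cycle.chain_coe_cons, Cycle.length_coe,
    Set.mem_ofPred_eq] at hs hC hin hoff ⊢
  -- The path `v :: t` enters the cycle at `u`; return to `v` from the predecessor `p` of `u`,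
  -- or, when `p = x`, from the vertex before `p`.
  have hcyc : IsChain r (u :: L ++ [p]) := hC.left_of_append
  by_cases hpx : p = x
  · subst hpx
    have hpL : p ∉ u :: L := fun h => (nodup_append.1 hs).2.2 p h p (mem_singleton_self p) rfl
    have ht : t ≠ [] := by
      rintro rfl
      exact hr _ _ (isChain_pair.1 hpath) (hin u (by simp) fun h => hpL (h ▸ mem_cons_self))
    have hsub : u :: L ⊆ u :: (L ++ [p]) := (prefix_append (u :: L) [p]).subset
    refine hasCycleLongerThan_of_isChain (l₂ := L) hpath
      (hcyc.left_of_append.concat fun a ha => hin a (hsub (mem_of_getLast? ha))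
        fun h => hpL (h ▸ mem_of_getLast? ha))
      (hnd.append (hs.sublist (by simp)) fun y hy hyL => hoff y hy (hsub hyL)) ?_
    have := length_pos_of_ne_nil ht
    simp; omega
  · exact hasCycleLongerThan_of_isChain (l₂ := L ++ [p]) hpath
      (hcyc.concat (by simpa [getLast?_cons] using hin p (by simp) hpx)) (hnd.append hs hoff)
      (by simp)

theorem rel_succ_of_twin {s : Cycle α} {x y v : α} {l : List α}
    (hr : ∀ a b, r a b → ¬ r b a) (hs : s.Nodup) (hC : s.Chain r) (hxy : s = ↑(x :: y :: l))
    (hv : v ∉ s) (hreach : ∃ z ∈ s, ReflTransGen r v z)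
    (hcomp : ∀ z ∈ s, z ≠ x → r z v ∨ r v z) (hmax : ¬ HasCycleLongerThan r s.length) :
    r v y := by
  -- Otherwise `y → v`. Either every vertex but `x` dominates `v`, or along `y :: l` there is a
  -- first switch from `· → v` to `v → ·`, where `v` can be inserted.
  by_contra hvy
  have hxyl : (x :: y :: l).Nodup := by rwa [hxy, Cycle.nodup_coe_iff] at hs
  have hyx : y ≠ x := fun h => by simp [h] at hxyl
  have hyv : r y v := (hcomp y (by simp [hxy]) hyx).resolve_right hvy
  by_cases hin : ∀ z ∈ s, z ≠ x → r z v
  · exact hmax (hasCycleLongerThan_of_forall_ne_rel hr hs hC (by simp [hxy]) hv hreach hin)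
  push Not at hin
  obtain ⟨z, hz, hzx, hzv⟩ := hin
  have hzl : z ∈ l := by
    simp only [hxy, Cycle.mem_coe_iff, mem_cons] at hz
    rcases hz with rfl | rfl | hz
    exacts [absurd rfl hzx, absurd hyv hzv, hz]
  obtain ⟨l₁, a, b, l₂, he, hav, hbv⟩ :=
    List.exists_append_cons_cons_of_mem (P := (r · v)) hyv hzl hzv
  have hb : b ∈ y :: l := by simp [he]
  have hbx : b ≠ x := by rintro rfl; exact (nodup_cons.1 hxyl).1 hb
  have hvb : r v b := (hcomp b (by simp [hxy, hb]) hbx).resolve_left hbv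
  refine hmax (hasCycleLongerThan_of_insert_vertex (l := l₂ ++ x :: l₁) hs hC ?_ hv hav hvb)
  rw [hxy, he]
  exact Cycle.coe_append_comm (x :: l₁) _

theorem rel_pred_of_twin {s : Cycle α} {x y v : α} {l : List α}
    (hr : ∀ a b, r a b → ¬ r b a) (hs : s.Nodup) (hC : s.Chain r) (hxy : s = ↑(x :: y :: l))
    (hv : v ∉ s) (hreach : ∃ z ∈ s, ReflTransGen r z v)
    (hcomp : ∀ z ∈ s, z ≠ y → r z v ∨ r v z) (hmax : ¬ HasCycleLongerThan r s.length) :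
    r x v :=
  rel_succ_of_twin (r := flip r) (fun a b h => hr b a h) (Cycle.nodup_reverse_iff.2 hs)
    (Cycle.chain_reverse_iff.2 hC) (by rw [hxy, Cycle.reverse_coe_cons_cons])
    (by rwa [Cycle.mem_reverse_iff])
    (hreach.imp fun _ ⟨hz, h⟩ => ⟨Cycle.mem_reverse_iff.2 hz, reflTransGen_swap.2 h⟩)
    (fun z hz hzy => (hcomp z (Cycle.mem_reverse_iff.1 hz) hzy).symm)
    (fun h => hmax (by simpa using h.of_flip))

theorem hasCycleLongerThan_of_forall_comparable {s : Cycle α} {v : α}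
    (hr : ∀ a b, r a b → ¬ r b a) (hstrong : ∀ a b, ReflTransGen r a b) (hs : s.Nodup)
    (hC : s.Chain r) (h2 : 2 ≤ s.length) (hv : v ∉ s) (hcomp : ∀ z ∈ s, r z v ∨ r v z) :
    HasCycleLongerThan r s.length := by
  obtain ⟨x, y, l, hxy⟩ := Cycle.exists_eq_coe_cons_cons h2
  have hx : x ∈ s := by simp [hxy]
  by_cases hin : ∀ z ∈ s, r z v
  · exact hasCycleLongerThan_of_forall_ne_rel (x := v) hr hs hC h2 hv ⟨x, hx, hstrong v x⟩
      fun z hz _ => hin z hz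
  by_cases hout : ∀ z ∈ s, r v z
  · refine HasCycleLongerThan.of_flip ?_
    rw [← Cycle.length_reverse]
    refine hasCycleLongerThan_of_forall_ne_rel (x := v) (fun a b h => hr b a h)
      (Cycle.nodup_reverse_iff.2 hs) (Cycle.chain_reverse_iff.2 hC)
      (by rwa [Cycle.length_reverse]) (by rwa [Cycle.mem_reverse_iff])
      ⟨x, Cycle.mem_reverse_iff.2 hx, reflTransGen_swap.2 (hstrong x v)⟩
      fun z hz _ => hout z (Cycle.mem_reverse_iff.1 hz)
  push Not at hin hout
  obtain ⟨z₂, hz₂, hz₂v⟩ := hin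
  obtain ⟨z₁, hz₁, hvz₁⟩ := hout
  have hz₁v : r z₁ v := (hcomp z₁ hz₁).resolve_right hvz₁
  obtain ⟨K, rfl⟩ := Cycle.exists_eq_coe_cons_of_mem hz₁
  have hz₂K : z₂ ∈ K := by
    rcases mem_cons.1 (Cycle.mem_coe_iff.1 hz₂) with rfl | h
    · exact absurd hz₁v hz₂v
    · exact h
  obtain ⟨l₁, a, b, l₂, he, hav, hbv⟩ :=
    List.exists_append_cons_cons_of_mem (P := (r · v)) hz₁v hz₂K hz₂v
  have hvb : r v b := (hcomp b (by simp [he])).resolve_left hbv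
  exact hasCycleLongerThan_of_insert_vertex hs hC (by rw [he, Cycle.coe_append_comm]; rfl) hv hav
    hvb

theorem hasCycleLongerThan_of_twin_cycle {s : Cycle α} {w : α → α} (hs : s.Nodup)
    (hC : s.Chain r) (h2 : 2 ≤ s.length) (hw : ∀ x y l, s = ↑(x :: y :: l) → r (w x) (w y))
    (hwinj : ∀ a ∈ s, ∀ b ∈ s, w a = w b → a = b) (hws : ∀ a ∈ s, w a ∉ s)
    (hcross : ∀ x y l, s = ↑(x :: y :: l) → r (w x) y ∧ r x (w y)) :
    HasCycleLongerThan r s.length := by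
  have hwC := Cycle.chain_of_forall_eq_coe_cons_cons h2 hw
  obtain ⟨x, y, l, hxy⟩ := Cycle.exists_eq_coe_cons_cons h2
  obtain ⟨hwxy, hxwy⟩ := hcross x y l hxy
  -- the cycle `y, l, x, w y, w l, w x`
  set K := y :: (l ++ [x])
  have hK : s = ↑K := hxy.trans (Cycle.coe_cons_eq_coe_append _ _)
  rw [hK, Cycle.chain_coe_cons] at hwC hC
  rw [hK, Cycle.nodup_coe_iff] at hs
  simp only [hK, Cycle.mem_coe_iff] at hwinj hws
  have hwK : IsChain r (K.map w ++ [y]) :=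
    ((isChain_map w).2 hwC.left_of_append).append (isChain_singleton y) fun a ha b hb => by
      rw [show K.map w = (w y :: l.map w) ++ [w x] by simp [K], getLast?_concat] at ha
      obtain rfl : w x = a := by simpa using ha
      obtain rfl : y = b := by simpa using hb
      exact hwxy
  refine hasCycleLongerThan_of_isChain (l₂ := K.map w) hC.left_of_append (hwK.cons_cons hxwy) ?_
    (by simp [hK, K])
  rw [append_cons]
  exact hs.append (hs.map_on hwinj) fun a ha hmem => by
    obtain ⟨b, hb, rfl⟩ := mem_map.1 hmem
    exact hws b hb ha

theorem hasCycleLongerThan_of_twins {β : Type*} {part : α → β} {s : Cycle α}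
    (hr : ∀ a b, r a b → ¬ r b a) (hstrong : ∀ a b, ReflTransGen r a b)
    (hcomp : ∀ a b, part a ≠ part b → r a b ∨ r b a) (hs : s.Nodup) (hC : s.Chain r)
    (h2 : 2 ≤ s.length) (hinj : ∀ a ∈ s, ∀ b ∈ s, part a = part b → a = b)
    (htwin : ∀ a ∈ s, ∃ b ∉ s, part b = part a) : HasCycleLongerThan r s.length := by
  by_contra hmax
  choose! w hws hwp using htwin
  have hpart : ∀ a ∈ s, ∀ b ∈ s, a ≠ b → part a ≠ part (w b) := fun a ha b hb hab h =>
    hab (hinj a ha b hb (h.trans (hwp b hb)))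
  have hcross : ∀ x y l, s = ↑(x :: y :: l) → r (w x) y ∧ r x (w y) := by
    intro x y l hxy
    have hx : x ∈ s := by simp [hxy]
    have hy : y ∈ s := by simp [hxy]
    exact ⟨rel_succ_of_twin hr hs hC hxy (hws x hx) ⟨x, hx, hstrong _ _⟩
        (fun z hz hzx => hcomp _ _ (hpart z hz x hx hzx)) hmax,
      rel_pred_of_twin hr hs hC hxy (hws y hy) ⟨y, hy, hstrong _ _⟩
        (fun z hz hzy => hcomp _ _ (hpart z hz y hy hzy)) hmax⟩
  by_cases hw : ∀ x y l, s = ↑(x :: y :: l) → r (w x) (w y)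
  · exact hmax (hasCycleLongerThan_of_twin_cycle hs hC h2 hw
      (fun a ha b hb h => hinj a ha b hb (by rw [← hwp a ha, ← hwp b hb, h])) hws hcross)
  push Not at hw
  obtain ⟨x, y, l, hxy, hwxy⟩ := hw
  have hx : x ∈ s := by simp [hxy]
  have hy : y ∈ s := by simp [hxy]
  have hne : x ≠ y := by
    rintro rfl
    rw [hxy, Cycle.nodup_coe_iff] at hs
    simp at hs
  have hwyx : r (w y) (w x) :=
    (hcomp _ _ (by rw [hwp x hx]; exact hpart x hx y hy hne)).resolve_left hwxy
  have hwne : w y ≠ w x := fun h => hr _ _ hwyx (h ▸ hwyx)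
  exact hmax (hasCycleLongerThan_of_insert (P := [w y, w x]) hs hC hxy
    (by simp [(hcross x y l hxy).1, (hcross x y l hxy).2, hwyx]) (by simpa using hwne)
    (by simpa using ⟨hws y hy, hws x hx⟩) (cons_ne_nil _ _))

theorem exists_longest_cycle {m n : ℕ} (hm : HasCycleLongerThan r m)
    (hn : ¬ HasCycleLongerThan r n) :
    ∃ s : Cycle α, s.Nodup ∧ s.Chain r ∧ m < s.length ∧ ¬ HasCycleLongerThan r s.length := by
  classical
  have hex : ∃ k, ¬ HasCycleLongerThan r k := ⟨n, hn⟩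
  have hmk : m < Nat.find hex := lt_of_not_ge fun h => Nat.find_spec hex (hm.mono h)
  obtain ⟨s, hs, hC, hlen⟩ := not_not.1 (Nat.find_min hex (Nat.sub_one_lt_of_lt hmk))
  have hle : s.length ≤ Nat.find hex := le_of_not_gt fun h => Nat.find_spec hex ⟨s, hs, hC, h⟩
  have hk : s.length = Nat.find hex := by omega
  exact ⟨s, hs, hC, hk ▸ hmk, hk ▸ Nat.find_spec hex⟩

theorem hasCycleLongerThan_one {a b : α} (hr : ∀ a b, r a b → ¬ r b a)
    (hstrong : ∀ a b, ReflTransGen r a b) (hab : a ≠ b) : HasCycleLongerThan r 1 := by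
  obtain rfl | ⟨c, hac, -⟩ := (hstrong a b).cases_head
  · exact absurd rfl hab
  have hca : c ∉ ({a} : Set α) := by
    rintro rfl
    exact hr _ _ hac hac
  obtain ⟨t, u, rfl, hpath, hnd, hoff⟩ := exists_path_into_of_reflTransGen hca rfl (hstrong c a)
  exact hasCycleLongerThan_of_isChain (l₁ := []) (isChain_pair.2 hac) hpath
    (nodup_cons.2 ⟨fun h => hoff _ h rfl, hnd⟩) (by simp)

end Relation

section Multipartite

variable {V : Type*} {D : Digraph V} {c : ℕ} {part : V → Fin c}

theorem IsCPT.adj_asymm (hT : IsCPT D c part) {x y : V} (h : D.Adj x y) : ¬ D.Adj y x := by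
  have hxy : part x ≠ part y := fun hp => hT.not_adj_of_same x y hp h
  rcases hT.xor_adj x y hxy with ⟨-, h'⟩ | ⟨-, h'⟩
  exacts [h', absurd h h']

theorem IsCPT.adj_or_adj (hT : IsCPT D c part) {x y : V} (h : part x ≠ part y) :
    D.Adj x y ∨ D.Adj y x :=
  (hT.xor_adj x y h).imp And.left And.left

theorem IsWalk.reflTransGen {n : ℕ} {f : ℕ → V} {x y : V} (h : IsWalk D n f x y) :
    ReflTransGen D.Adj x y := by
  obtain ⟨rfl, rfl, hadj⟩ := h
  induction n with
  | zero => rfl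
  | succ n ih => exact (ih fun i hi => hadj i (by omega)).tail (hadj n (by omega))

theorem IsStrong.reflTransGen (h : IsStrong D) (x y : V) : ReflTransGen D.Adj x y := by
  by_cases hxy : x = y
  · exact hxy ▸ .refl
  · obtain ⟨n, f, hf⟩ := h x y hxy
    exact hf.reflTransGen

theorem HasCycleLongerThan.exists_hasCycle {n : ℕ} (h : HasCycleLongerThan D.Adj n) :
    ∃ q, n < q ∧ HasCycle D q := by
  obtain ⟨s, hs, hC, hn⟩ := h
  obtain ⟨L, rfl⟩ : ∃ L : List V, (L : Cycle V) = s := Quot.exists_rep s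
  rcases L with _ | ⟨a, l⟩
  · simp at hn
  simp only [Cycle.nodup_coe_iff, Cycle.chain_coe_cons, Cycle.length_coe] at hs hC hn
  refine ⟨l.length + 1, hn, fun i => (a :: l)[i.val]'(ZMod.val_lt i),
    fun i j hij => ZMod.val_injective _ (hs.getElem_inj_iff.1 hij), fun i => ?_⟩
  have hrot : (a :: l).rotate 1 = l ++ [a] := by simp [rotate_cons_succ]
  have h := (isChain_cons_append_singleton_iff_forall₂.1 hC).get (ZMod.val_lt i)
    (by simpa using ZMod.val_lt i)
  simp only [List.get_eq_getElem, ← hrot, getElem_rotate] at h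
  convert h using 2
  rw [ZMod.val_add, ZMod.val_one_eq_one_mod, Nat.add_mod_mod]
  rfl

end Multipartite

end MPT

open MPT

/-- Bondy: every rich `c`-partite tournament (`c ≥ 5`) contains a
`q`-cycle for some `q > c`. -/
theorem stmt_11 {V : Type*} (c : ℕ) (hc : 5 ≤ c) (D : Digraph V) (part : V → Fin c)
    (hT : IsCPT D c part) (hR : IsRich D c part) :
    ∃ q : ℕ, c < q ∧ HasCycle D q := by
  obtain ⟨hS, hrich⟩ := hR
  have hr : ∀ a b, D.Adj a b → ¬ D.Adj b a := fun _ _ => hT.adj_asymm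
  have hstrong := hS.reflTransGen
  by_contra hno
  replace hno : ¬ HasCycleLongerThan D.Adj c := fun h => hno h.exists_hasCycle
  obtain ⟨u, u', huu', -⟩ := hrich ⟨0, by omega⟩
  obtain ⟨s, hs, hC, h2, hmax⟩ := exists_longest_cycle (hasCycleLongerThan_one hr hstrong huu') hno
  have hcover : ∀ p, ∃ z ∈ s, part z = p := by
    intro p
    by_contra! hp
    obtain ⟨v, rfl⟩ := hT.part_surj p
    exact hmax (hasCycleLongerThan_of_forall_comparable hr hstrong hs hC h2
      (fun hv => hp v hv rfl) fun z hz => hT.adj_or_adj (hp z hz))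
  have hinj : ∀ a ∈ s, ∀ b ∈ s, part a = part b → a = b := by
    refine Cycle.injOn_of_length_le_card ?_ hcover
    simpa using le_of_not_gt fun h => hno ⟨s, hs, hC, h⟩
  refine hmax (hasCycleLongerThan_of_twins hr hstrong (fun _ _ => hT.adj_or_adj) hs hC h2 hinj
    fun a ha => ?_)
  obtain ⟨b, b', hbb', hb, hb'⟩ := hrich (part a)
  by_cases hbs : b ∈ s
  · exact ⟨b', fun hb's => hbb' (hinj b hbs b' hb's (hb.trans hb'.symm)), hb'⟩
  · exact ⟨b, hbs, hb⟩
end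

section
/- Let D be a strong c-partite tournament with no (c+2)-cycle. Then every (c+1)-cycle of D contains vertices from all c partite sets; consequently, every (c+1)-cycle of D contains exactly two vertices of one partite set and exactly one vertex of each of the other c−1 partite sets. -/
open MPT

namespace Stmt12

variable {V : Type*}

def rev (D : Digraph V) : Digraph V := ⟨fun a b => D.Adj b a⟩

lemma hasCycle_rev {D : Digraph V} {q : ℕ} (h : HasCycle (rev D) q) : HasCycle D q := by
  obtain ⟨g, hginj, hgadj⟩ := h
  refine ⟨fun i => g (-i), fun a b hab => neg_injective (hginj hab), fun i => ?_⟩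
  have h2 := hgadj (-(i+1))
  have h3 : -(i+1) + 1 = -i := by ring
  rw [h3] at h2
  exact h2

lemma isStrong_rev {D : Digraph V} (h : IsStrong D) : IsStrong (rev D) := by
  intro x y hxy
  obtain ⟨n, g, hg0, hgn, hgadj⟩ := h y x hxy.symm
  refine ⟨n, fun t => g (n - t), by simpa using hgn, by simpa using hg0, fun i hi => ?_⟩
  have h1 : n - i - 1 + 1 = n - i := by omega
  have h2 : n - (i+1) = n - i - 1 := by omega
  have := hgadj (n - i - 1) (by omega)
  rw [h1] at this
  show D.Adj (g (n - (i+1))) (g (n - i))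
  rw [h2]
  exact this

lemma isCPT_rev {D : Digraph V} {c : ℕ} {part : V → Fin c} (h : IsCPT D c part) :
    IsCPT (rev D) c part := by
  refine ⟨h.part_surj, fun x y hxy => h.not_adj_of_same y x hxy.symm, fun x y hxy => ?_⟩
  exact h.xor_adj y x (Ne.symm hxy)

lemma hasCycle_of_seq {D : Digraph V} {n : ℕ} (hn : 0 < n) (g : ℕ → V)
    (hinj : ∀ a b, a < n → b < n → g a = g b → a = b)
    (hadj : ∀ a, a + 1 < n → D.Adj (g a) (g (a+1)))
    (hclose : D.Adj (g (n-1)) (g 0)) : HasCycle D n := by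
  haveI : NeZero n := ⟨hn.ne'⟩
  refine ⟨fun i => g i.val, fun a b hab => ?_, fun i => ?_⟩
  · exact ZMod.val_injective n (hinj a.val b.val (ZMod.val_lt a) (ZMod.val_lt b) hab)
  · have hv : (i+1).val = (i.val + 1) % n := by
      rcases Nat.lt_or_ge 1 n with h1 | h1
      · haveI : Fact (1 < n) := ⟨h1⟩
        rw [ZMod.val_add, ZMod.val_one]
      · have hn1 : n = 1 := by omega
        subst hn1
        have h9 : (i+1 : ZMod 1) = 0 := Subsingleton.elim _ _
        rw [h9, ZMod.val_zero, Nat.mod_one]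
    rcases Nat.lt_or_ge (i.val + 1) n with h1 | h1
    · have : (i+1).val = i.val + 1 := by rw [hv, Nat.mod_eq_of_lt h1]
      rw [show ((fun i : ZMod n => g i.val) (i+1)) = g ((i+1).val) from rfl, this]
      exact hadj i.val (by omega)
    · have hie : i.val = n - 1 := by have := ZMod.val_lt i; omega
      have : (i+1).val = 0 := by rw [hv, hie]; simp [show n - 1 + 1 = n by omega]
      rw [show ((fun i : ZMod n => g i.val) (i+1)) = g ((i+1).val) from rfl, this]
      rw [show ((fun i : ZMod n => g i.val) i) = g i.val from rfl, hie]
      exact hclose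


lemma cast_inj_of_lt {c a b : ℕ} (ha : a < c+1) (hb : b < c+1)
    (h : (a : ZMod (c+1)) = (b : ZMod (c+1))) : a = b := by
  rw [← ZMod.val_cast_of_lt ha, ← ZMod.val_cast_of_lt hb, h]

lemma insert_cycle {D : Digraph V} {c : ℕ} {f : ZMod (c+1) → V}
    (hfinj : Function.Injective f) (hf : ∀ i, D.Adj (f i) (f (i+1)))
    {u : V} (hu : ∀ k, u ≠ f k) {k : ZMod (c+1)}
    (h1 : D.Adj (f k) u) (h2 : D.Adj u (f (k+1))) :
    HasCycle D (c+2) := by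
  refine hasCycle_of_seq (by omega) (fun a => if a ≤ c then f (k + 1 + (a : ZMod (c+1))) else u)
    ?_ ?_ ?_
  · intro a b ha hb hab
    by_cases h3 : a ≤ c <;> by_cases h4 : b ≤ c <;> simp [h3, h4] at hab
    · have := hfinj hab
      have : (a : ZMod (c+1)) = b := by
        have h5 := hfinj hab
        exact add_left_cancel h5
      exact cast_inj_of_lt (by omega) (by omega) this
    · exact absurd hab.symm (hu _)
    · exact absurd hab (hu _)
    · omega
  · intro a ha
    by_cases h3 : a < c
    · have h4 : a ≤ c := by omega
      have h5 : a + 1 ≤ c := by omega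
      simp only [h4, h5, if_pos]
      have h6 : ((a+1 : ℕ) : ZMod (c+1)) = (a : ZMod (c+1)) + 1 := by push_cast; ring
      rw [h6, show k + 1 + ((a : ZMod (c+1)) + 1) = (k + 1 + a) + 1 by ring]
      exact hf _
    · have h4 : a = c := by omega
      have h6 : ((c : ℕ) : ZMod (c+1)) = -1 := by
        have h8 : ((c+1 : ℕ) : ZMod (c+1)) = 0 := ZMod.natCast_self _
        push_cast at h8
        linear_combination h8
      rw [h4]
      beta_reduce
      rw [if_pos (le_refl c), if_neg (show ¬ (c+1 ≤ c) by omega)]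
      rw [h6, show k + 1 + (-1 : ZMod (c+1)) = k by ring]
      exact h1
  · have h7 : c + 2 - 1 = c + 1 := by omega
    rw [h7]
    beta_reduce
    rw [if_neg (show ¬ (c+1 ≤ c) by omega), if_pos (Nat.zero_le c)]
    rw [Nat.cast_zero, show k + 1 + (0 : ZMod (c+1)) = k + 1 by ring]
    exact h2


lemma main_case {D : Digraph V} {c : ℕ} (hc : 1 ≤ c) {part : V → Fin c}
    (hT : IsCPT D c part) (hS : IsStrong D)
    {f : ZMod (c+1) → V} (hfinj : Function.Injective f)
    (hf : ∀ i, D.Adj (f i) (f (i+1))) {p : Fin c}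
    (hmiss : ∀ i, part (f i) ≠ p) {v : V} (hv : part v = p)
    (hvA : ∀ k, ¬ D.Adj v (f k)) : HasCycle D (c+2) := by
  by_contra hno
  set P : V → Prop := fun w => ∀ k, ¬ D.Adj w (f k) with hP
  have adjC : ∀ (w : V), part w = p → P w → ∀ k, D.Adj (f k) w := by
    intro w hwp hwP k
    have hne : part (f k) ≠ part w := by rw [hwp]; exact hmiss k
    rcases hT.xor_adj (f k) w hne with ⟨h, _⟩ | ⟨h, _⟩
    · exact h
    · exact absurd h (hwP k)
  have hfnotP : ∀ k, ¬ P (f k) := fun k hk => hk (k+1) (hf k)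
  set E : Set ℕ := {n | ∃ g : ℕ → V, (∀ a, a < n → D.Adj (g a) (g (a+1))) ∧
      part (g 0) = p ∧ P (g 0) ∧ ¬ P (g n)} with hE
  have hEne : E.Nonempty := by
    have hvne : v ≠ f 0 := fun h => hmiss 0 (by rw [← h, hv])
    obtain ⟨n, g, hg0, hgn, hgadj⟩ := hS v (f 0) hvne
    exact ⟨n, g, fun a ha => hgadj a ha, by rw [hg0]; exact hv, by rw [hg0]; exact hvA,
      by rw [hgn]; exact hfnotP 0⟩
  have hjE : sInf E ∈ E := Nat.sInf_mem hEne
  obtain ⟨y, hyadj, hy0p, hy0P, hyjP⟩ := hjE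
  set j := sInf E with hjdef
  have hj1 : 1 ≤ j := Nat.pos_of_ne_zero (fun h => hyjP (h ▸ hy0P))
  have hmemP : ∀ a, a < j → P (y a) := by
    intro a ha
    by_contra hq
    have hmem : a ∈ E := ⟨y, fun b hb => hyadj b (by omega), hy0p, hy0P, hq⟩
    have := Nat.sInf_le hmem
    rw [← hjdef] at this
    omega
  have hkey : ∀ a b, a < b → b ≤ j → y a ≠ y b := by
    intro a b hab hbj heq
    rcases eq_or_lt_of_le hbj with rfl | hbj'
    · exact hyjP (heq ▸ hmemP a hab)
    · have hmem : j - (b - a) ∈ E := by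
        refine ⟨fun t => if t ≤ a then y t else y (t + (b - a)), fun t ht => ?_, ?_, ?_, ?_⟩
        · beta_reduce
          by_cases h1 : t < a
          · rw [if_pos (by omega : t ≤ a), if_pos (by omega : t + 1 ≤ a)]
            exact hyadj t (by omega)
          · by_cases h2 : t = a
            · rw [if_pos (by omega : t ≤ a), if_neg (by omega : ¬ t + 1 ≤ a)]
              rw [h2, heq, show a + 1 + (b - a) = b + 1 by omega]
              exact hyadj b (by omega)
            · rw [if_neg (by omega : ¬ t ≤ a), if_neg (by omega : ¬ t + 1 ≤ a)]
              rw [show t + 1 + (b - a) = (t + (b - a)) + 1 by omega]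
              exact hyadj _ (by omega)

        · beta_reduce; rw [if_pos (Nat.zero_le a)]; exact hy0p
        · beta_reduce; rw [if_pos (Nat.zero_le a)]; exact hy0P
        · beta_reduce
          rw [if_neg (by omega : ¬ (j - (b - a) ≤ a))]
          rw [show j - (b - a) + (b - a) = j by omega]
          exact hyjP
      have := Nat.sInf_le hmem
      rw [← hjdef] at this
      omega
  have hinjy : ∀ a b, a ≤ j → b ≤ j → y a = y b → a = b := by
    intro a b ha hb heq
    rcases lt_trichotomy a b with h | h | h
    · exact absurd heq (hkey a b h hb)
    · exact h
    · exact absurd heq.symm (hkey b a h ha)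
  have hshort : ∀ a b, a + 2 ≤ b → b ≤ j → ¬ D.Adj (y a) (y b) := by
    intro a b hab hbj hadj
    have hmem : j - (b - a - 1) ∈ E := by
      refine ⟨fun t => if t ≤ a then y t else y (t + (b - a - 1)), fun t ht => ?_, ?_, ?_, ?_⟩
      · beta_reduce
        by_cases h1 : t < a
        · rw [if_pos (by omega : t ≤ a), if_pos (by omega : t + 1 ≤ a)]
          exact hyadj t (by omega)
        · by_cases h2 : t = a
          · rw [if_pos (by omega : t ≤ a), if_neg (by omega : ¬ t + 1 ≤ a)]
            rw [h2, show a + 1 + (b - a - 1) = b by omega]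
            exact hadj
          · rw [if_neg (by omega : ¬ t ≤ a), if_neg (by omega : ¬ t + 1 ≤ a)]
            rw [show t + 1 + (b - a - 1) = (t + (b - a - 1)) + 1 by omega]
            exact hyadj _ (by omega)

      · beta_reduce; rw [if_pos (Nat.zero_le a)]; exact hy0p
      · beta_reduce; rw [if_pos (Nat.zero_le a)]; exact hy0P
      · beta_reduce
        rw [if_neg (by omega : ¬ (j - (b - a - 1) ≤ a))]
        rw [show j - (b - a - 1) + (b - a - 1) = j by omega]
        exact hyjP
    have := Nat.sInf_le hmem
    rw [← hjdef] at this
    omega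
  have hzne : ∀ k, y j ≠ f k := by
    intro k heq
    have h1 := hmemP (j-1) (by omega)
    have h2 := hyadj (j-1) (by omega)
    rw [show j - 1 + 1 = j by omega, heq] at h2
    exact h1 k h2
  have hzE : ∃ k, D.Adj (y j) (f k) := by
    by_contra h
    push_neg at h
    exact hyjP h
  obtain ⟨i0, hi0⟩ := hzE
  rcases Nat.lt_or_ge c j with hcj | hjc
  · -- c < j
    rcases eq_or_lt_of_le (show c + 1 ≤ j by omega) with hj | hj2
    · -- j = c + 1
      by_cases hzp : part (y j) = p
      · by_cases hins : ∃ k, D.Adj (f k) (y j) ∧ D.Adj (y j) (f (k+1))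
        · obtain ⟨k, hk1, hk2⟩ := hins
          exact hno (insert_cycle hfinj hf hzne hk1 hk2)
        · push_neg at hins
          have hall : ∀ m : ℕ, D.Adj (y j) (f (i0 - (m : ZMod (c+1)))) := by
            intro m
            induction m with
            | zero => simpa using hi0
            | succ m ih =>
              by_contra hq
              have hne2 : part (f (i0 - ((m+1 : ℕ) : ZMod (c+1)))) ≠ part (y j) := by
                rw [hzp]; exact hmiss _
              have h5 : D.Adj (f (i0 - ((m+1:ℕ) : ZMod (c+1)))) (y j) := by
                rcases hT.xor_adj _ _ hne2 with ⟨h,_⟩|⟨h,_⟩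
                · exact h
                · exact absurd h hq
              have h6 := hins _ h5
              rw [show i0 - ((m+1 : ℕ) : ZMod (c+1)) + 1 = i0 - (m : ZMod (c+1)) by
                push_cast; ring] at h6
              exact h6 ih
          have hzall : ∀ k, D.Adj (y j) (f k) := by
            intro k
            have h8 := hall (i0 - k).val
            rwa [ZMod.natCast_val, ZMod.cast_id, sub_sub_cancel] at h8
          have hne01 : part (f 0) ≠ part (f 1) := by
            intro h
            exact hT.not_adj_of_same (f 0) (f 1) h (by simpa using hf 0)
          have hpick : ∃ i1 : ZMod (c+1), part (f i1) ≠ part (y 1) := by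
            by_cases hq : part (f 0) = part (y 1)
            · exact ⟨1, by rw [← hq]; exact fun h => hne01 h.symm⟩
            · exact ⟨0, hq⟩
          obtain ⟨i1, hi1⟩ := hpick
          have harc : D.Adj (f i1) (y 1) := by
            have hP1 : P (y 1) := hmemP 1 (by omega)
            rcases hT.xor_adj (f i1) (y 1) hi1 with ⟨h,_⟩|⟨h,_⟩
            · exact h
            · exact absurd h (hP1 i1)
          refine absurd (hasCycle_of_seq (n := c+2) (by omega)
            (fun a => if a ≤ c then y (a+1) else f i1) ?_ ?_ ?_) hno
          · intro a b ha hb hab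
            by_cases h1 : a ≤ c <;> by_cases h2 : b ≤ c <;> simp [h1, h2] at hab
            · have := hinjy (a+1) (b+1) (by omega) (by omega) hab; omega
            · exfalso
              rcases eq_or_lt_of_le (show a + 1 ≤ j by omega) with h3 | h3
              · exact hzne i1 (by rw [← h3]; exact hab)
              · exact hfnotP i1 (hab ▸ hmemP (a+1) h3)
            · exfalso
              rcases eq_or_lt_of_le (show b + 1 ≤ j by omega) with h3 | h3
              · exact hzne i1 (by rw [← h3]; exact hab.symm)
              · exact hfnotP i1 (hab.symm ▸ hmemP (b+1) h3)
            · omega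
          · intro a ha
            by_cases h1 : a < c
            · have e1 : a ≤ c := by omega
              have e2 : a + 1 ≤ c := by omega
              simp only [e1, e2, if_true]
              exact hyadj (a+1) (by omega)
            · have e1 : a = c := by omega
              rw [e1]
              beta_reduce
              rw [if_pos (le_refl c), if_neg (by omega : ¬ c + 1 ≤ c)]
              rw [show c + 1 = j from hj]
              exact hzall i1
          · rw [show c + 2 - 1 = c + 1 by omega]
            beta_reduce
            rw [if_neg (by omega : ¬ c + 1 ≤ c), if_pos (Nat.zero_le c)]
            rw [show (0:ℕ) + 1 = 1 by omega]
            exact harc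
      · have hadjz : D.Adj (y j) (y 0) := by
          have hne2 : part (y 0) ≠ part (y j) := by
            rw [hy0p]; exact fun h => hzp h.symm
          rcases hT.xor_adj (y 0) (y j) hne2 with ⟨h,_⟩|⟨h,_⟩
          · exact absurd h (hshort 0 j (by omega) (le_refl j))
          · exact h
        refine absurd (hasCycle_of_seq (n := c+2) (by omega) y ?_ ?_ ?_) hno
        · intro a b ha hb hab
          exact hinjy a b (by omega) (by omega) hab
        · intro a ha
          exact hyadj a (by omega)
        · rw [show c + 2 - 1 = c + 1 by omega, show c + 1 = j from hj]
          exact hadjz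
    · -- c + 1 < j
      have hper : ∀ b, b + c + 1 ≤ j - 1 → part (y (b + c + 1)) = part (y b) := by
        intro b hb
        by_contra hq
        rcases hT.xor_adj (y (b+c+1)) (y b) hq with ⟨h,_⟩|⟨h,_⟩
        · refine absurd (hasCycle_of_seq (n := c+2) (by omega) (fun a => y (b+a)) ?_ ?_ ?_) hno
          · intro a1 a2 h1 h2 hab
            have := hinjy (b+a1) (b+a2) (by omega) (by omega) hab
            omega
          · intro a hA
            have := hyadj (b+a) (by omega)
            rwa [show b + a + 1 = b + (a+1) by omega] at this
          · rw [show c + 2 - 1 = c + 1 by omega]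
            beta_reduce
            rw [show b + (c+1) = b + c + 1 by omega]
            exact h
        · exact absurd h (hshort b (b+c+1) (by omega) (by omega))
      have hmult : ∀ m : ℕ, m * (c+1) ≤ j - 1 → part (y (m * (c+1))) = p := by
        intro m
        induction m with
        | zero => intro _; simpa using hy0p
        | succ m ih =>
          intro hm
          have hmm : (m+1) * (c+1) = m * (c+1) + c + 1 := by ring
          have h1 : m * (c+1) ≤ j - 1 := by omega
          have h2 := hper (m * (c+1)) (by omega)
          rw [hmm, h2]
          exact ih h1
      have hb0le : ((j-1) / (c+1)) * (c+1) ≤ j - 1 := Nat.div_mul_le_self _ _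
      have hb0pos : 0 < ((j-1) / (c+1)) * (c+1) := by
        have h1 : 1 ≤ (j-1) / (c+1) := (Nat.one_le_div_iff (by omega)).mpr (by omega)
        exact Nat.mul_pos h1 (by omega)
      have hyb0 : part (y (((j-1) / (c+1)) * (c+1))) = p := hmult _ hb0le
      have hmem : j - ((j-1) / (c+1)) * (c+1) ∈ E := by
        refine ⟨fun t => y (((j-1) / (c+1)) * (c+1) + t), fun t ht => ?_, ?_, ?_, ?_⟩
        · have := hyadj (((j-1) / (c+1)) * (c+1) + t) (by omega)
          rwa [show ((j-1) / (c+1)) * (c+1) + t + 1 = ((j-1) / (c+1)) * (c+1) + (t+1) by omega]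
            at this
        · simpa using hyb0
        · simpa using hmemP _ (by omega)
        · beta_reduce
          rw [show ((j-1) / (c+1)) * (c+1) + (j - ((j-1) / (c+1)) * (c+1)) = j by omega]
          exact hyjP
      have h9 := Nat.sInf_le hmem
      rw [← hjdef] at h9
      omega
  · -- j ≤ c
    refine absurd (hasCycle_of_seq (n := c+2) (by omega)
      (fun a => if a ≤ j then y a else f (i0 + ((a - j - 1 : ℕ) : ZMod (c+1)))) ?_ ?_ ?_) hno
    · intro a b ha hb hab
      by_cases h1 : a ≤ j <;> by_cases h2 : b ≤ j <;> simp [h1, h2] at hab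
      · exact hinjy a b h1 h2 hab
      · exfalso
        rcases eq_or_lt_of_le h1 with h3 | h3
        · exact hzne _ (h3 ▸ hab)
        · exact hfnotP _ (hab ▸ hmemP a h3)
      · exfalso
        rcases eq_or_lt_of_le h2 with h3 | h3
        · exact hzne _ (h3 ▸ hab.symm)
        · exact hfnotP _ (hab.symm ▸ hmemP b h3)
      · have h4 := hfinj hab
        have h5 := add_left_cancel h4
        have := cast_inj_of_lt (show a - j - 1 < c + 1 by omega)
          (show b - j - 1 < c + 1 by omega) h5
        omega
    · intro a ha
      by_cases h1 : a < j
      · have e1 : a ≤ j := by omega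
        have e2 : a + 1 ≤ j := by omega
        simp only [e1, e2, if_true]
        exact hyadj a h1
      · by_cases h2 : a = j
        · rw [h2]
          beta_reduce
          rw [if_pos (le_refl j), if_neg (by omega : ¬ j + 1 ≤ j)]
          rw [show j + 1 - j - 1 = 0 by omega]
          rw [Nat.cast_zero, add_zero]
          exact hi0
        · have e1 : ¬ a ≤ j := by omega
          have e2 : ¬ a + 1 ≤ j := by omega
          simp only [e1, e2, if_false]
          rw [show ((a + 1 - j - 1 : ℕ) : ZMod (c+1)) = ((a - j - 1 : ℕ) : ZMod (c+1)) + 1 by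
            rw [show a + 1 - j - 1 = (a - j - 1) + 1 by omega]; push_cast; ring]
          rw [← add_assoc]
          exact hf _
    · rw [show c + 2 - 1 = c + 1 by omega]
      beta_reduce
      rw [if_neg (by omega : ¬ c + 1 ≤ j), if_pos (Nat.zero_le j)]
      exact adjC (y 0) hy0p hy0P _


lemma no_missed {D : Digraph V} {c : ℕ} (hc : 1 ≤ c) {part : V → Fin c}
    (hT : IsCPT D c part) (hS : IsStrong D) (hno : ¬ HasCycle D (c+2))
    {f : ZMod (c+1) → V} (hfinj : Function.Injective f)
    (hf : ∀ i, D.Adj (f i) (f (i+1))) (p : Fin c) : ∃ i, part (f i) = p := by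
  by_contra hmiss
  push_neg at hmiss
  obtain ⟨v, hv⟩ := hT.part_surj p
  have hvnotf : ∀ k, v ≠ f k := fun k h => hmiss k (by rw [← h, hv])
  by_cases hins : ∃ k, D.Adj (f k) v ∧ D.Adj v (f (k+1))
  · obtain ⟨k, h1, h2⟩ := hins
    exact hno (insert_cycle hfinj hf hvnotf h1 h2)
  · push_neg at hins
    by_cases hA : ∀ k, ¬ D.Adj v (f k)
    · exact hno (main_case hc hT hS hfinj hf hmiss hv hA)
    · have hCv : ∀ k, ¬ D.Adj (f k) v := by
        by_contra hq
        push_neg at hq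
        obtain ⟨m, hm⟩ := hq
        have hall : ∀ t : ℕ, D.Adj (f (m + (t : ZMod (c+1)))) v := by
          intro t
          induction t with
          | zero => simpa using hm
          | succ t ih =>
            have h3 := hins _ ih
            have hne2 : part v ≠ part (f (m + (t : ZMod (c+1)) + 1)) := by
              rw [hv]; exact fun h => hmiss _ h.symm
            rcases hT.xor_adj v (f (m + (t : ZMod (c+1)) + 1)) hne2 with ⟨h,_⟩|⟨h,_⟩
            · exact absurd h h3
            · rwa [show (m + ((t+1:ℕ) : ZMod (c+1))) = m + (t : ZMod (c+1)) + 1 by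
                push_cast; ring]
        apply hA
        intro k
        have h5 := hall (k - m).val
        rw [ZMod.natCast_val, ZMod.cast_id, add_sub_cancel] at h5
        have hne2 : part v ≠ part (f k) := by rw [hv]; exact fun h => hmiss _ h.symm
        rcases hT.xor_adj v (f k) hne2 with ⟨h,h'⟩|⟨h,h'⟩
        · exact absurd h5 h'
        · exact h'
      have hvC : ∀ k, D.Adj v (f k) := by
        intro k
        rcases hT.xor_adj v (f k) (by rw [hv]; exact fun h => hmiss _ h.symm) with ⟨h,_⟩|⟨h,_⟩
        · exact h
        · exact absurd h (hCv k)
      have hadjrev : ∀ i : ZMod (c+1), (rev D).Adj (f (-i)) (f (-(i+1))) := by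
        intro i
        have h1 := hf (-(i+1))
        rw [show -(i+1) + 1 = -i by ring] at h1
        exact h1
      have hrev := main_case (D := rev D) hc (isCPT_rev hT) (isStrong_rev hS)
        (f := fun i => f (-i)) (fun a b hab => neg_injective (hfinj hab))
        hadjrev (fun i => hmiss (-i)) hv (fun k => hCv (-k))
      exact hno (hasCycle_rev hrev)

theorem stmt12 {V : Type*} (c : ℕ) (D : Digraph V) (part : V → Fin c)
    (hT : IsCPT D c part) (hS : IsStrong D)
    (hno : ¬ HasCycle D (c + 2)) :
    ∀ f : ZMod (c + 1) → V, Function.Injective f →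
      (∀ i : ZMod (c + 1), D.Adj (f i) (f (i + 1))) →
      (∀ p : Fin c, ∃ i : ZMod (c + 1), part (f i) = p) ∧
      ∃ p : Fin c,
        (∃ i j : ZMod (c + 1), i ≠ j ∧ part (f i) = p ∧ part (f j) = p ∧
          ∀ k : ZMod (c + 1), part (f k) = p → k = i ∨ k = j) ∧
        ∀ p' : Fin c, p' ≠ p → ∃! i : ZMod (c + 1), part (f i) = p' := by
  intro f hfinj hf
  rcases Nat.eq_zero_or_pos c with rfl | hc
  · exact (part (f 0)).elim0
  have hsurj : ∀ p : Fin c, ∃ i, part (f i) = p := no_missed hc hT hS hno hfinj hf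
  refine ⟨hsurj, ?_⟩
  classical
  have hgnotinj : ¬ Function.Injective (fun i : ZMod (c+1) => part (f i)) := by
    intro h
    have := Fintype.card_le_of_injective _ h
    rw [ZMod.card, Fintype.card_fin] at this
    omega
  rw [Function.not_injective_iff] at hgnotinj
  obtain ⟨i, j, hgij, hij⟩ := hgnotinj
  have hji : j ≠ i := Ne.symm hij
  have hcard : Fintype.card {k : ZMod (c+1) // k ≠ i} = Fintype.card (Fin c) := by
    rw [Fintype.card_fin]
    have h1 : Fintype.card {k : ZMod (c+1) // k ≠ i} =
        Fintype.card (ZMod (c+1)) - 1 := by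
      simp [Fintype.card_subtype_compl]
    rw [h1, ZMod.card]
    omega
  have hsurj' : Function.Surjective
      (fun k : {k : ZMod (c+1) // k ≠ i} => part (f k.val)) := by
    intro q
    obtain ⟨m, hm⟩ := hsurj q
    by_cases hmi : m = i
    · refine ⟨⟨j, hji⟩, ?_⟩
      show part (f j) = q
      rw [← hgij, ← hmi]
      exact hm
    · exact ⟨⟨m, hmi⟩, hm⟩
  have hinj' : Function.Injective
      (fun k : {k : ZMod (c+1) // k ≠ i} => part (f k.val)) :=
    ((Fintype.bijective_iff_surjective_and_card _).mpr ⟨hsurj', hcard⟩).1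
  refine ⟨part (f i), ⟨i, j, hij, rfl, hgij.symm, ?_⟩, ?_⟩
  · intro k hk
    by_cases hki : k = i
    · exact Or.inl hki
    · right
      have h1 : (fun k : {k : ZMod (c+1) // k ≠ i} => part (f k.val)) ⟨k, hki⟩ =
          (fun k : {k : ZMod (c+1) // k ≠ i} => part (f k.val)) ⟨j, hji⟩ := by
        show part (f k) = part (f j)
        rw [← hgij]
        exact hk
      exact congrArg Subtype.val (hinj' h1)
  · intro p' hp'
    obtain ⟨m, hm⟩ := hsurj p'
    have hmi : m ≠ i := fun h => hp' (by rw [← hm, h])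
    refine ⟨m, hm, ?_⟩
    intro k hk
    have hki : k ≠ i := fun h => hp' (by rw [← hk, h])
    have h1 : (fun k : {k : ZMod (c+1) // k ≠ i} => part (f k.val)) ⟨k, hki⟩ =
        (fun k : {k : ZMod (c+1) // k ≠ i} => part (f k.val)) ⟨m, hmi⟩ := by
      show part (f k) = part (f m)
      rw [hk, hm]
    exact congrArg Subtype.val (hinj' h1)

end Stmt12


/-- in a strong `c`-partite tournament with no `(c+2)`-cycle, every
`(c+1)`-cycle meets all `c` partite sets; consequently it has exactly two vertices in
one partite set and exactly one vertex in each of the others. -/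
theorem stmt_12 {V : Type*} (c : ℕ) (D : Digraph V) (part : V → Fin c)
    (hT : IsCPT D c part) (hS : IsStrong D)
    (hno : ¬ HasCycle D (c + 2)) :
    ∀ f : ZMod (c + 1) → V, Function.Injective f →
      (∀ i : ZMod (c + 1), D.Adj (f i) (f (i + 1))) →
      (∀ p : Fin c, ∃ i : ZMod (c + 1), part (f i) = p) ∧
      ∃ p : Fin c,
        (∃ i j : ZMod (c + 1), i ≠ j ∧ part (f i) = p ∧ part (f j) = p ∧
          ∀ k : ZMod (c + 1), part (f k) = p → k = i ∨ k = j) ∧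
        ∀ p' : Fin c, p' ≠ p → ∃! i : ZMod (c + 1), part (f i) = p' :=
  Stmt12.stmt12 c D part hT hS hno
end

section
/- Let D be a c-partite tournament with no (c+2)-cycle, and let x_1x_2⋯x_m be a directed path in D with dist(x_1, x_m) = m − 1. Then for every index i with 1 ≤ i ≤ m − c − 1, the vertices x_i and x_{i+c+1} belong to the same partite set of D. -/
open MPT

/-!
Suppose `x_i` and `x_{i+c+1}` lie in different partite sets, so they are joined by an arc.
A forward arc `x_i → x_{i+c+1}` shortcuts the path, contradicting `dist(x_1, x_m) = m - 1`.
A backward arc closes the segment `x_i ⋯ x_{i+c+1}` into a cycle through `c + 2` vertices,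
which are distinct because a geodesic path cannot revisit a vertex.
-/

namespace MPT

variable {V : Type*} {D : Digraph V}

theorem IsWalk.append {a b : ℕ} {f g : ℕ → V} {u v w : V}
    (hf : IsWalk D a f u v) (hg : IsWalk D b g v w) :
    IsWalk D (a + b) (fun n => if n ≤ a then f n else g (n - a)) u w := by
  obtain ⟨hf0, hfa, hfs⟩ := hf
  obtain ⟨hg0, hgb, hgs⟩ := hg
  refine ⟨by simpa using hf0, ?_, fun n hn => ?_⟩
  · by_cases hb : b = 0
    · subst hb
      simp [hfa, ← hg0, hgb]
    · simp [show ¬ a + b ≤ a by omega, hgb]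
  · rcases lt_trichotomy n a with h | rfl | h
    · simpa [h.le, Nat.succ_le_of_lt h] using hfs n h
    · simpa [hfa, ← hg0] using hgs 0 (by omega)
    · simpa [show ¬ n ≤ a by omega, show ¬ n + 1 ≤ a by omega,
        show n + 1 - a = n - a + 1 by omega] using hgs (n - a) (by omega)

theorem isWalk_of_adj {u v : V} (h : D.Adj u v) :
    IsWalk D 1 (fun n => if n = 0 then u else v) u v :=
  ⟨rfl, rfl, fun n hn => by simpa [Nat.lt_one_iff.mp hn] using h⟩

theorem dist_le_of_isWalk {n : ℕ} {f : ℕ → V} {u v : V} (h : IsWalk D n f u v) :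
    dist D u v ≤ n :=
  Nat.sInf_le ⟨f, h⟩

section Path

variable {m : ℕ} {x : ℕ → V} (hpath : ∀ i, 1 ≤ i → i < m → D.Adj (x i) (x (i + 1)))
include hpath

theorem isWalk_segment {j k : ℕ} (hj : 1 ≤ j) (hjk : j ≤ k) (hk : k ≤ m) :
    IsWalk D (k - j) (fun n => x (j + n)) (x j) (x k) :=
  ⟨rfl, by simp only [Nat.add_sub_cancel' hjk], fun n hn => hpath (j + n) (by omega) (by omega)⟩

theorem dist_le_of_adj_of_path {j k : ℕ} (hj : 1 ≤ j) (hjk : j ≤ k) (hk : k ≤ m)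
    (hadj : D.Adj (x j) (x k)) :
    dist D (x 1) (x m) ≤ (j - 1) + 1 + (m - k) :=
  dist_le_of_isWalk <| ((isWalk_segment hpath le_rfl hj (hjk.trans hk)).append
    (isWalk_of_adj hadj)).append (isWalk_segment hpath (hj.trans hjk) hk le_rfl)

theorem dist_le_of_eq_of_path {j k : ℕ} (hj : 1 ≤ j) (hjk : j ≤ k) (hk : k ≤ m)
    (heq : x j = x k) :
    dist D (x 1) (x m) ≤ (j - 1) + (m - k) := by
  have hkm := isWalk_segment hpath (hj.trans hjk) hk le_rfl
  rw [← heq] at hkm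
  exact dist_le_of_isWalk <|
    (isWalk_segment hpath le_rfl hj (hjk.trans hk)).append hkm

theorem injOn_of_dist_eq_of_path (hdist : dist D (x 1) (x m) = m - 1) :
    Set.InjOn x (Set.Icc 1 m) := by
  have key : ∀ j k, 1 ≤ j → j < k → k ≤ m → x j ≠ x k := fun j k hj hjk hk heq => by
    have := dist_le_of_eq_of_path hpath hj hjk.le hk heq
    omega
  rintro j ⟨hj, hjm⟩ k ⟨hk, hkm⟩ heq
  by_contra hne
  rcases Nat.lt_or_gt_of_ne hne with h | h
  · exact key j k hj h hkm heq
  · exact key k j hk h hjm heq.symm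

end Path

theorem hasCycle_of_closed_path (q : ℕ) [NeZero q] (f : ℕ → V) (hinj : Set.InjOn f (Set.Iio q))
    (hstep : ∀ k, k + 1 < q → D.Adj (f k) (f (k + 1))) (hclose : D.Adj (f (q - 1)) (f 0)) :
    HasCycle D q := by
  refine ⟨fun z => f z.val, fun a b hab => ZMod.val_injective q <|
    hinj (ZMod.val_lt a) (ZMod.val_lt b) hab, fun z => ?_⟩
  have hz := ZMod.val_lt z
  have hcast : z + 1 = ((z.val + 1 : ℕ) : ZMod q) := by
    rw [Nat.cast_add_one, ZMod.natCast_zmod_val]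
  by_cases hlast : z.val + 1 = q
  · have hz1 : z + 1 = 0 := by rw [hcast, hlast, ZMod.natCast_self]
    simpa [hz1, show z.val = q - 1 by omega] using hclose
  · have hz1 : (z + 1).val = z.val + 1 := by rw [hcast, ZMod.val_natCast_of_lt (by omega)]
    simpa [hz1] using hstep z.val (by omega)

end MPT

/-- in a `c`-partite tournament with no `(c+2)`-cycle, along a directed
path `x_1 x_2 ⋯ x_m` with `dist(x_1, x_m) = m - 1`, the vertices `x_i` and `x_{i+c+1}`
belong to the same partite set. -/
theorem stmt_14 {V : Type*} (c : ℕ) (D : Digraph V) (part : V → Fin c)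
    (hT : IsCPT D c part)
    (hno : ¬ HasCycle D (c + 2))
    (m : ℕ) (x : ℕ → V)
    (hpath : ∀ i, 1 ≤ i → i < m → D.Adj (x i) (x (i + 1)))
    (hdist : MPT.dist D (x 1) (x m) = m - 1) :
    ∀ i, 1 ≤ i → i + c + 1 ≤ m → part (x i) = part (x (i + c + 1)) := by
  intro i hi him
  by_contra hne
  have hc : 0 < c := (part (x i)).pos
  rcases hT.xor_adj _ _ hne with ⟨hfwd, -⟩ | ⟨hbwd, -⟩
  · have := dist_le_of_adj_of_path hpath hi (by omega) him hfwd
    omega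
  · have hinj := injOn_of_dist_eq_of_path hpath hdist
    refine hno (hasCycle_of_closed_path (c + 2) (fun k => x (i + k))
      (fun a ha b hb hab => ?_) (fun k hk => hpath (i + k) (by omega) (by omega)) ?_)
    · have := hinj ⟨by omega, by have := Set.mem_Iio.mp ha; omega⟩
        ⟨by omega, by have := Set.mem_Iio.mp hb; omega⟩ hab
      omega
    · simpa [Nat.add_assoc] using hbwd
end
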